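/- arXiv:2507.03551 — 10 statements merged into one kernel-verified Lean document; each statement's English description precedes it below -/
import Mathlib

section
/- Let 0 < b < a. For every t > 0, one has -Φ_{a,b}(t)/t² = ∫₀^∞ e^{-ts} ξ_{a,b}(s) ds, i.e. -Φ_{a,b}(t)/t² is the Laplace transform of ξ_{a,b} evaluated at t. -/
open MeasureTheory Real Set Filter Topology

/-- `Φ_{a,b}(t) = (b-a) + (e^{-bt} - e^{-at})/(1 - e^{-t})`. -/
noncomputable def Phi (a b : ℝ) (t : ℝ) : ℝ :=
  (b - a) + (Real.exp (-b * t) - Real.exp (-a * t)) / (1 - Real.exp (-t))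

/-- `ξ_{a,b}(s) = (a-b)s + Σ_{k=0}^∞ (max(s-k-a,0) - max(s-k-b,0))`. -/
noncomputable def xi (a b : ℝ) (s : ℝ) : ℝ :=
  (a - b) * s + ∑' k : ℕ, (max (s - k - a) 0 - max (s - k - b) 0)

lemma aux_tendsto (t c : ℝ) (ht : 0 < t) :
    Tendsto (fun s : ℝ => -((s - c) / t + 1 / t ^ 2) * Real.exp (-t * s)) atTop (𝓝 0) := by
  have hts : Tendsto (fun s : ℝ => t * s) atTop atTop :=
    Tendsto.const_mul_atTop ht tendsto_id
  have h1 : Tendsto (fun s : ℝ => s * Real.exp (-t * s)) atTop (𝓝 0) := by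
    have hb : Tendsto (fun x : ℝ => x ^ 1 * Real.exp (-x) / t) atTop (𝓝 (0 / t)) :=
      (tendsto_pow_mul_exp_neg_atTop_nhds_zero 1).div_const t
    have := hb.comp hts
    rw [zero_div] at this
    refine this.congr fun s => ?_
    simp only [Function.comp_apply, pow_one, neg_mul]
    field_simp
  have h2 : Tendsto (fun s : ℝ => Real.exp (-t * s)) atTop (𝓝 0) := by
    have := (Real.tendsto_exp_neg_atTop_nhds_zero).comp hts
    refine this.congr fun s => by simp [Function.comp, neg_mul]
  have h3 := ((h1.const_mul (-(1/t))).add (h2.const_mul (c/t - 1/t^2)))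
  rw [mul_zero, mul_zero, add_zero] at h3
  refine h3.congr fun s => ?_
  field_simp
  ring

lemma core (t c : ℝ) (ht : 0 < t) :
    IntegrableOn (fun s => Real.exp (-t * s) * (s - c)) (Ioi c) volume ∧
    ∫ s in Ioi c, Real.exp (-t * s) * (s - c) = Real.exp (-t * c) / t ^ 2 := by
  set F : ℝ → ℝ := fun s => -((s - c) / t + 1 / t ^ 2) * Real.exp (-t * s) with hF
  have hderiv : ∀ x : ℝ, HasDerivAt F (Real.exp (-t * x) * (x - c)) x := by
    intro x
    have he : HasDerivAt (fun s : ℝ => Real.exp (-t * s)) (Real.exp (-t * x) * (-t)) x := by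
      have h0 : HasDerivAt (fun s : ℝ => -t * s) (-t) x := by
        simpa using (hasDerivAt_id x).const_mul (-t)
      simpa using h0.exp
    have hl : HasDerivAt (fun s : ℝ => -((s - c) / t + 1 / t ^ 2)) (-(1 / t)) x := by
      have : HasDerivAt (fun s : ℝ => (s - c) / t + 1 / t ^ 2) (1 / t) x := by
        exact (((hasDerivAt_id x).sub_const c).div_const t).add_const (1 / t ^ 2)
      exact this.neg
    have := hl.mul he
    refine this.congr_deriv ?_
    field_simp
    ring
  have hpos : ∀ x ∈ Ioi c, 0 ≤ Real.exp (-t * x) * (x - c) := fun x hx =>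
    mul_nonneg (Real.exp_nonneg _) (by simp only [mem_Ioi] at hx; linarith)
  have htend := aux_tendsto t c ht
  have hcont : ContinuousWithinAt F (Ici c) c := (hderiv c).continuousAt.continuousWithinAt
  refine ⟨integrableOn_Ioi_deriv_of_nonneg hcont (fun x _ => hderiv x) hpos htend, ?_⟩
  rw [integral_Ioi_of_hasDerivAt_of_nonneg hcont (fun x _ => hderiv x) hpos htend]
  simp only [hF, sub_self, zero_div, zero_add]
  field_simp
  ring

lemma int_max (t c : ℝ) (ht : 0 < t) (hc : 0 ≤ c) :
    IntegrableOn (fun s => Real.exp (-t * s) * max (s - c) 0) (Ioi 0) volume ∧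
    ∫ s in Ioi 0, Real.exp (-t * s) * max (s - c) 0 = Real.exp (-t * c) / t ^ 2 := by
  obtain ⟨hint, hval⟩ := core t c ht
  have heq : EqOn (fun s => Real.exp (-t * s) * max (s - c) 0)
      (fun s => Real.exp (-t * s) * (s - c)) (Ioi c) := fun s hs => by
    simp only [mem_Ioi] at hs
    simp only [max_eq_left (by linarith : (0:ℝ) ≤ s - c)]
  constructor
  · have h1 : IntegrableOn (fun s => Real.exp (-t * s) * max (s - c) 0) (Ioi c) volume :=
      (hint.congr_fun (fun s hs => (heq hs).symm) measurableSet_Ioi)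
    have h2 : IntegrableOn (fun s => Real.exp (-t * s) * max (s - c) 0) (Ioc 0 c) volume := by
      refine (integrableOn_zero (μ := volume) (s := Ioc 0 c)).congr_fun
        (fun s hs => ?_) measurableSet_Ioc
      simp only [mem_Ioc] at hs
      simp [max_eq_right (by linarith : s - c ≤ 0)]
    have := h2.union h1
    rwa [Ioc_union_Ioi_eq_Ioi hc] at this
  · rw [setIntegral_eq_of_subset_of_forall_diff_eq_zero measurableSet_Ioi
      (Ioi_subset_Ioi hc) ?_]
    · rw [setIntegral_congr_fun measurableSet_Ioi heq, hval]
    · intro x hx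
      obtain ⟨hx0, hxc⟩ := hx
      simp only [mem_Ioi, not_lt] at hxc
      simp [max_eq_right (by linarith : x - c ≤ 0)]

theorem laplace_repr_neg_Phi_div_sq (a b : ℝ) (hb : 0 < b) (hba : b < a)
    (t : ℝ) (ht : 0 < t) :
    -(Phi a b t) / t ^ 2 = ∫ s in Set.Ioi (0 : ℝ), Real.exp (-t * s) * xi a b s := by
  have ha : 0 < a := hb.trans hba
  set g : ℕ → ℝ → ℝ := fun k s =>
    Real.exp (-t * s) * (max (s - k - a) 0 - max (s - k - b) 0) with hg
  -- basic facts
  have hr1 : Real.exp (-t) < 1 := by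
    have : Real.exp (-t) < Real.exp 0 := Real.exp_lt_exp.2 (by linarith)
    simpa using this
  -- decomposition of each g k
  have hgeq : ∀ k : ℕ, ∀ s : ℝ, g k s =
      Real.exp (-t * s) * max (s - ((k : ℝ) + a)) 0
        - Real.exp (-t * s) * max (s - ((k : ℝ) + b)) 0 := by
    intro k s
    simp only [hg, sub_sub, mul_sub]
  have hma : ∀ k : ℕ, (0:ℝ) ≤ (k : ℝ) + a := fun k => by positivity
  have hmb : ∀ k : ℕ, (0:ℝ) ≤ (k : ℝ) + b := fun k => by positivity
  -- integrability of each g k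
  have gint : ∀ k : ℕ, IntegrableOn (g k) (Ioi 0) volume := by
    intro k
    have h1 : IntegrableOn (fun s : ℝ => Real.exp (-t * s) * max (s - ((k:ℝ) + a)) 0
        - Real.exp (-t * s) * max (s - ((k:ℝ) + b)) 0) (Ioi 0) volume :=
      ((int_max t _ ht (hma k)).1).sub ((int_max t _ ht (hmb k)).1)
    exact h1.congr_fun (fun s _ => (hgeq k s).symm) measurableSet_Ioi
  -- exponent decomposition
  have hed : ∀ c : ℝ, ∀ k : ℕ, Real.exp (-t * ((k : ℝ) + c))
      = Real.exp (-t) ^ k * Real.exp (-c * t) := by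
    intro c k
    rw [show -t * ((k : ℝ) + c) = (k : ℝ) * (-t) + -c * t by ring, Real.exp_add,
      Real.exp_nat_mul]
  -- value of each integral
  have gval : ∀ k : ℕ, ∫ s in Ioi (0:ℝ), g k s
      = Real.exp (-t) ^ k * ((Real.exp (-a * t) - Real.exp (-b * t)) / t ^ 2) := by
    intro k
    simp only [hgeq]
    rw [integral_sub (int_max t _ ht (hma k)).1 (int_max t _ ht (hmb k)).1,
      (int_max t _ ht (hma k)).2, (int_max t _ ht (hmb k)).2, hed a k, hed b k]
    ring
  -- value of the norm integrals
  have gnormval : ∀ k : ℕ, ∫ s in Ioi (0:ℝ), ‖g k s‖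
      = Real.exp (-t) ^ k * ((Real.exp (-b * t) - Real.exp (-a * t)) / t ^ 2) := by
    intro k
    have hnorm : ∀ s : ℝ, ‖g k s‖ =
        Real.exp (-t * s) * max (s - ((k : ℝ) + b)) 0
          - Real.exp (-t * s) * max (s - ((k : ℝ) + a)) 0 := by
      intro s
      have hle : max (s - (k:ℝ) - a) 0 ≤ max (s - (k:ℝ) - b) 0 :=
        max_le_max (by linarith) le_rfl
      rw [hg, Real.norm_eq_abs, abs_mul, abs_of_nonneg (Real.exp_nonneg _),
        abs_of_nonpos (by linarith), neg_sub, mul_sub, sub_sub, sub_sub,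
        ← sub_sub, ← sub_sub]
    simp only [hnorm]
    rw [integral_sub (int_max t _ ht (hmb k)).1 (int_max t _ ht (hma k)).1,
      (int_max t _ ht (hmb k)).2, (int_max t _ ht (hma k)).2, hed a k, hed b k]
    ring
  -- summability of norm integrals
  have gnormsummable : Summable fun k : ℕ => ∫ s in Ioi (0:ℝ), ‖g k s‖ := by
    have : (fun k : ℕ => ∫ s in Ioi (0:ℝ), ‖g k s‖)
        = fun k : ℕ => Real.exp (-t) ^ k
            * ((Real.exp (-b * t) - Real.exp (-a * t)) / t ^ 2) := funext gnormval
    rw [this]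
    exact (summable_geometric_of_lt_one (Real.exp_nonneg _) hr1).mul_right _
  -- finite support pointwise
  have hsupp : ∀ s : ℝ, ∀ k : ℕ, k ∉ Finset.range ⌈s⌉₊ → g k s = 0 := by
    intro s k hk
    simp only [Finset.mem_range, not_lt] at hk
    have hks : s ≤ (k : ℝ) := le_trans (Nat.le_ceil s) (by exact_mod_cast hk)
    have h1 : s - (k:ℝ) - a ≤ 0 := by linarith
    have h2 : s - (k:ℝ) - b ≤ 0 := by linarith
    simp [hg, max_eq_right h1, max_eq_right h2]
  have hsummable : ∀ s : ℝ, Summable (fun k => g k s) := fun s =>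
    summable_of_ne_finset_zero (hsupp s)
  -- measurability of the tsum
  have hgcont : ∀ k : ℕ, Continuous (g k) := by
    intro k
    rw [hg]
    exact (Real.continuous_exp.comp (continuous_const.mul continuous_id)).mul
      ((((continuous_id.sub continuous_const).sub continuous_const).max continuous_const).sub
        (((continuous_id.sub continuous_const).sub continuous_const).max continuous_const))
  have hmeas : AEStronglyMeasurable (fun s : ℝ => ∑' k, g k s) (volume.restrict (Ioi 0)) := by
    apply aestronglyMeasurable_of_tendsto_ae (u := atTop)
      (f := fun n : ℕ => fun s : ℝ => ∑ k ∈ Finset.range n, g k s)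
    · exact fun n => (continuous_finset_sum _ fun k _ => hgcont k).aestronglyMeasurable
    · exact ae_of_all _ fun s => (hsummable s).hasSum.tendsto_sum_nat
  -- pointwise bound for the tsum
  have hbound : ∀ s ∈ Ioi (0:ℝ), ‖∑' k, g k s‖
      ≤ (a - b) * (Real.exp (-t * s) * s) + (a - b) * Real.exp (-t * s) := by
    intro s hs
    rw [tsum_eq_sum (hsupp s)]
    have h2 : ∀ k : ℕ, ‖g k s‖ ≤ Real.exp (-t * s) * (a - b) := by
      intro k
      rw [hg, Real.norm_eq_abs, abs_mul, abs_of_nonneg (Real.exp_nonneg _)]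
      refine mul_le_mul_of_nonneg_left ?_ (Real.exp_nonneg _)
      calc |max (s - (k:ℝ) - a) 0 - max (s - (k:ℝ) - b) 0|
          ≤ |(s - (k:ℝ) - a) - (s - (k:ℝ) - b)| := abs_max_sub_max_le_abs _ _ _
        _ = a - b := by
            rw [show (s - (k:ℝ) - a) - (s - (k:ℝ) - b) = -(a - b) by ring, abs_neg,
              abs_of_nonneg (by linarith)]
    have h4 : (⌈s⌉₊ : ℝ) ≤ s + 1 := (Nat.ceil_lt_add_one (le_of_lt hs)).le
    calc ‖∑ k ∈ Finset.range ⌈s⌉₊, g k s‖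
        ≤ ∑ k ∈ Finset.range ⌈s⌉₊, ‖g k s‖ := norm_sum_le _ _
      _ ≤ ∑ _k ∈ Finset.range ⌈s⌉₊, Real.exp (-t * s) * (a - b) :=
          Finset.sum_le_sum fun k _ => h2 k
      _ = (⌈s⌉₊ : ℝ) * (Real.exp (-t * s) * (a - b)) := by
          rw [Finset.sum_const, Finset.card_range, nsmul_eq_mul]
      _ ≤ (s + 1) * (Real.exp (-t * s) * (a - b)) :=
          mul_le_mul_of_nonneg_right h4 (mul_nonneg (Real.exp_nonneg _) (by linarith))
      _ = (a - b) * (Real.exp (-t * s) * s) + (a - b) * Real.exp (-t * s) := by ring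
  -- integrable bound
  have hf0 : IntegrableOn (fun s : ℝ => Real.exp (-t * s) * s) (Ioi 0) volume := by
    simpa using (core t 0 ht).1
  have hf0val : ∫ s in Ioi (0:ℝ), Real.exp (-t * s) * s = 1 / t ^ 2 := by
    have := (core t 0 ht).2
    simpa using this
  have hB : IntegrableOn (fun s : ℝ => (a - b) * (Real.exp (-t * s) * s)
      + (a - b) * Real.exp (-t * s)) (Ioi 0) volume := by
    have hexp : IntegrableOn (fun s : ℝ => Real.exp (-t * s)) (Ioi 0) volume :=
      exp_neg_integrableOn_Ioi 0 ht
    exact (hf0.const_mul _).add (hexp.const_mul _)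
  have htsumint : IntegrableOn (fun s : ℝ => ∑' k, g k s) (Ioi 0) volume := by
    refine Integrable.mono' hB hmeas ?_
    rw [ae_restrict_iff' measurableSet_Ioi]
    exact ae_of_all _ hbound
  -- value of the tsum integral
  have htsumval : ∫ s in Ioi (0:ℝ), ∑' k, g k s
      = (1 - Real.exp (-t))⁻¹ * ((Real.exp (-a * t) - Real.exp (-b * t)) / t ^ 2) := by
    rw [← integral_tsum_of_summable_integral_norm gint gnormsummable]
    simp only [gval]
    rw [tsum_mul_right, tsum_geometric_of_lt_one (Real.exp_nonneg _) hr1]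
  -- put everything together
  have hxieq : EqOn (fun s : ℝ => Real.exp (-t * s) * xi a b s)
      (fun s : ℝ => (a - b) * (Real.exp (-t * s) * s) + ∑' k, g k s) (Ioi 0) := by
    intro s _
    simp only [xi, mul_add, hg]
    rw [← tsum_mul_left]
    ring
  rw [setIntegral_congr_fun measurableSet_Ioi hxieq,
    integral_add (hf0.const_mul (a - b)) htsumint, integral_const_mul, hf0val, htsumval]
  have hne : (0:ℝ) < 1 - Real.exp (-t) := by linarith
  simp only [Phi]
  field_simp
  ring
end

section
/- Let (a,b) satisfy 0 < b < a and a > 1. Then ξ_{a,b}(s) ≥ 0 for all s ≥ 0. -/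
open Real Set

lemma xi_term_zero (a b s : ℝ) (hb : 0 < b) (hba : b < a) {k : ℕ} (hk : s - b ≤ k) :
    max (s - k - a) 0 - max (s - k - b) 0 = 0 := by
  rw [max_eq_right (by linarith), max_eq_right (by linarith)]
  ring

lemma xi_eq_finsum (a b s : ℝ) (hb : 0 < b) (hba : b < a) (N : ℕ) (hN : s - b ≤ N) :
    xi a b s = (a - b) * s + ∑ k ∈ Finset.range N, (max (s - k - a) 0 - max (s - k - b) 0) := by
  unfold xi
  congr 1
  apply tsum_eq_sum
  intro k hk
  rw [Finset.mem_range, not_lt] at hk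
  exact xi_term_zero a b s hb hba (le_trans hN (by exact_mod_cast Nat.cast_le.mpr hk))

lemma xi_step (a b s : ℝ) (hb : 0 < b) (hba : b < a) (hs : 1 ≤ s) :
    xi a b (s - 1) ≤ xi a b s := by
  obtain ⟨N, hN⟩ := exists_nat_ge (s - b)
  have h1 : xi a b s = (a - b) * s +
      ∑ k ∈ Finset.range (N + 1), (max (s - k - a) 0 - max (s - k - b) 0) :=
    xi_eq_finsum a b s hb hba (N + 1) (by push_cast; linarith)
  have h2 : xi a b (s - 1) = (a - b) * (s - 1) +
      ∑ k ∈ Finset.range N, (max ((s - 1) - k - a) 0 - max ((s - 1) - k - b) 0) :=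
    xi_eq_finsum a b (s - 1) hb hba N (by linarith)
  rw [Finset.sum_range_succ'] at h1
  have h3 : ∀ k : ℕ, max (s - (k + 1 : ℕ) - a) 0 - max (s - (k + 1 : ℕ) - b) 0
      = max ((s - 1) - k - a) 0 - max ((s - 1) - k - b) 0 := by
    intro k
    push_cast
    ring_nf
  simp only [h3] at h1
  have h4 : max (s - (0 : ℕ) - b) 0 - max (s - (0 : ℕ) - a) 0 ≤ a - b := by
    push_cast
    apply sub_le_iff_le_add.mpr
    apply max_le
    · have : s - 0 - b = (s - 0 - a) + (a - b) := by ring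
      rw [this]
      have := le_max_left (s - 0 - a) 0
      linarith
    · have := le_max_right (s - 0 - a) 0
      linarith
  linarith
theorem xi_nonneg (a b : ℝ) (hb : 0 < b) (hba : b < a) (ha : 1 < a) :
    ∀ s : ℝ, 0 ≤ s → 0 ≤ xi a b s := by
  have base : ∀ s : ℝ, 0 ≤ s → s ≤ 1 → 0 ≤ xi a b s := by
    intro s hs0 hs1
    have h1 : xi a b s = (a - b) * s +
        ∑ k ∈ Finset.range 1, (max (s - k - a) 0 - max (s - k - b) 0) :=
      xi_eq_finsum a b s hb hba 1 (by push_cast; linarith)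
    rw [Finset.sum_range_one] at h1
    push_cast at h1
    rw [max_eq_right (by linarith)] at h1
    rcases le_or_gt s b with h | h
    · rw [max_eq_right (by linarith)] at h1
      rw [h1]
      nlinarith
    · rw [max_eq_left (by linarith)] at h1
      rw [h1]
      nlinarith
  have aux : ∀ n : ℕ, ∀ s : ℝ, 0 ≤ s → s ≤ n + 1 → 0 ≤ xi a b s := by
    intro n
    induction n with
    | zero => intro s h0 h1; exact base s h0 (by push_cast at h1; linarith)
    | succ n ih =>
      intro s h0 h1
      rcases le_or_gt s (n + 1) with h | h
      · exact ih s h0 h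
      · have hs1 : 1 ≤ s := by
          have : (0 : ℝ) ≤ n := Nat.cast_nonneg n
          linarith
        have := ih (s - 1) (by linarith) (by push_cast at h1 ⊢; linarith)
        linarith [xi_step a b s hb hba hs1]
  intro s hs
  obtain ⟨n, hn⟩ := exists_nat_ge s
  exact aux n s hs (by linarith)
end

section
/- Let (a,b) satisfy 0 < b < a and a > 1. Then η_{a,b}(s) ≥ 0 for all s ≥ 0. -/
open Real Set

/-- `η_{a,b}(s) = Σ_{k=0}^∞ ((b+k) max(s-k-b,0) - (a+k) max(s-k-a,0))`. -/
noncomputable def eta (a b : ℝ) (s : ℝ) : ℝ :=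
  ∑' k : ℕ, ((b + k) * max (s - k - b) 0 - (a + k) * max (s - k - a) 0)

lemma gauss_sum_real (n : ℕ) : ∑ k ∈ Finset.range n, (k : ℝ) = n * (n - 1) / 2 := by
  induction n with
  | zero => simp
  | succ m ih => rw [Finset.sum_range_succ, ih]; push_cast; ring

theorem eta_nonneg (a b : ℝ) (hb : 0 < b) (hba : b < a) (ha : 1 < a) :
    ∀ s : ℝ, 0 ≤ s → 0 ≤ eta a b s := by
  intro s hs
  set f : ℕ → ℝ := fun k => (b + k) * max (s - k - b) 0 - (a + k) * max (s - k - a) 0 with hf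
  have key : ∀ M : ℕ, s ≤ M → eta a b s = ∑ k ∈ Finset.range M, f k := by
    intro M hM
    rw [eta]
    apply tsum_eq_sum
    intro k hk
    have hk' : (M : ℝ) ≤ k := Nat.cast_le.2 (le_of_not_gt (by simpa using hk))
    have h1 : s - k - b ≤ 0 := by linarith
    have h2 : s - k - a ≤ 0 := by linarith
    simp [hf, max_eq_right h1, max_eq_right h2]
  rcases le_or_gt s a with hsa | hsa
  · -- s ≤ a : every term is nonnegative
    obtain ⟨M, hM⟩ := exists_nat_ge s
    rw [key M hM]
    apply Finset.sum_nonneg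
    intro k _
    have h2 : s - k - a ≤ 0 := by
      have : (0:ℝ) ≤ k := Nat.cast_nonneg k
      linarith
    have : f k = (b + k) * max (s - k - b) 0 := by
      simp [hf, max_eq_right h2]
    rw [this]
    have hbk : (0:ℝ) ≤ b + k := by positivity
    exact mul_nonneg hbk (le_max_right _ _)
  · -- a < s
    set N : ℕ := ⌈s - a⌉₊ with hN
    have hN1 : s - a ≤ N := Nat.le_ceil _
    have hN2 : (N : ℝ) < s - a + 1 := Nat.ceil_lt_add_one (by linarith)
    have hN0 : (0:ℝ) < N := lt_of_lt_of_le (by linarith) hN1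
    obtain ⟨M0, hM0⟩ := exists_nat_ge s
    set M : ℕ := N + 1 + M0 with hM
    have hMs : s ≤ M := by
      have : (M0:ℝ) ≤ M := by
        have : M0 ≤ M := by omega
        exact_mod_cast this
      linarith
    have hNM : N ≤ M := by omega
    rw [key M hMs, Finset.range_eq_Ico,
      ← Finset.sum_Ico_consecutive _ (Nat.zero_le N) hNM, ← Finset.range_eq_Ico]
    -- sum over range N
    have hterm : ∀ k ∈ Finset.range N, f k = (a-b)*(a+b-s) + (2*(a-b))*(k:ℝ) := by
      intro k hk
      have hk1 : (k : ℝ) + 1 ≤ N := by exact_mod_cast Finset.mem_range.1 hk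
      have h1 : 0 ≤ s - k - a := by linarith
      have h2 : 0 ≤ s - k - b := by linarith
      simp only [hf, max_eq_left h1, max_eq_left h2]
      ring
    have hA : ∑ k ∈ Finset.range N, f k = (a-b)*((N:ℝ)*(a+b-s)) + (a-b)*((N:ℝ)*((N:ℝ)-1)) := by
      rw [Finset.sum_congr rfl hterm, Finset.sum_add_distrib, Finset.sum_const,
        Finset.card_range, ← Finset.mul_sum, gauss_sum_real]
      ring
    -- sum over Ico N M is at least f N, and terms are nonnegative
    have hnonneg : ∀ k ∈ Finset.Ico N M, 0 ≤ f k := by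
      intro k hk
      have hk1 : (N : ℝ) ≤ k := by exact_mod_cast (Finset.mem_Ico.1 hk).1
      have h2 : s - k - a ≤ 0 := by linarith
      have : f k = (b + k) * max (s - k - b) 0 := by
        simp [hf, max_eq_right h2]
      rw [this]
      exact mul_nonneg (by positivity) (le_max_right _ _)
    have hB : f N ≤ ∑ k ∈ Finset.Ico N M, f k := by
      apply Finset.single_le_sum hnonneg
      simp [Finset.mem_Ico]
      omega
    have hfN : f N = (b + N) * max (s - N - b) 0 := by
      have h2 : s - (N:ℝ) - a ≤ 0 := by linarith
      simp [hf, max_eq_right h2]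
    rw [hA]
    rcases le_or_gt (s - (N:ℝ) - b) 0 with hcase | hcase
    · have hfN0 : f N = 0 := by rw [hfN, max_eq_right hcase, mul_zero]
      have h3 : 0 ≤ (a-b)*((N:ℝ)*(a+b-s)) + (a-b)*((N:ℝ)*((N:ℝ)-1)) := by
        nlinarith [mul_nonneg (le_of_lt hN0) (show (0:ℝ) ≤ a + b + N - 1 - s by linarith),
          sub_pos.2 hba]
      linarith [hB, hfN0 ▸ hB]
    · have hfN1 : f N = (b + N) * (s - N - b) := by
        rw [hfN, max_eq_left (le_of_lt hcase)]
      rw [hfN1] at hB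
      nlinarith [mul_nonneg (mul_nonneg (show (0:ℝ) ≤ a + N - s by linarith) (le_of_lt hN0))
          (show (0:ℝ) ≤ a - 1 by linarith),
        mul_nonneg (mul_nonneg (le_of_lt hcase) (le_of_lt hb))
          (show (0:ℝ) ≤ (N:ℝ) + 1 by linarith)]
end

section
/- Let 0 < b < a. For every x > 0, -(d/dx) log M_{a,b}(x) = ∫₀^∞ e^{-xt} Φ_{a,b}(t) dt; equivalently, (b-a)/x - ψ(x+b) + ψ(x+a) = ∫₀^∞ e^{-xt} Φ_{a,b}(t) dt, where ψ = (log Γ)' is the digamma function. -/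
open MeasureTheory Real Set

/-- `M_{a,b}(x) = x^{a-b} Γ(x+b)/Γ(x+a)`. -/
noncomputable def M (a b : ℝ) (x : ℝ) : ℝ :=
  x ^ (a - b) * Real.Gamma (x + b) / Real.Gamma (x + a)

/-- The digamma function `ψ = (log Γ)'`. -/
noncomputable def digamma : ℝ → ℝ :=
  deriv (fun y : ℝ => Real.log (Real.Gamma y))

open Filter Finset Topology

lemma aux_inv_le {p : ℝ} (hp : 0 < p) (k : ℕ) :
    (p + k)⁻¹ ≤ (min p 1)⁻¹ * ((k : ℝ) + 1)⁻¹ := by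
  rw [← mul_inv]
  apply inv_anti₀
  · positivity
  · have h1 : min p 1 ≤ p := min_le_left _ _
    have h2 : min p 1 ≤ 1 := min_le_right _ _
    nlinarith [Nat.cast_nonneg (α := ℝ) k]

lemma summable_inv_mul_inv {p q : ℝ} (hp : 0 < p) (hq : 0 < q) :
    Summable (fun k : ℕ => (p + k)⁻¹ * (q + k)⁻¹) := by
  have hbase : Summable (fun k : ℕ => ((k : ℝ) + 1)⁻¹ * ((k : ℝ) + 1)⁻¹) := by
    have h0 : Summable (fun n : ℕ => 1 / (n : ℝ) ^ 2) :=
      Real.summable_one_div_nat_pow.mpr one_lt_two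
    have := (summable_nat_add_iff 1).mpr h0
    refine this.congr fun n => ?_
    push_cast
    rw [← mul_inv]
    ring_nf
  have := (hbase.mul_left ((min p 1)⁻¹ * (min q 1)⁻¹))
  refine this.of_nonneg_of_le (fun k => by positivity) fun k => ?_
  calc (p + k)⁻¹ * (q + k)⁻¹
      ≤ ((min p 1)⁻¹ * ((k : ℝ) + 1)⁻¹) * ((min q 1)⁻¹ * ((k : ℝ) + 1)⁻¹) := by
        apply mul_le_mul (aux_inv_le hp k) (aux_inv_le hq k) (by positivity) (by positivity)
    _ = (min p 1)⁻¹ * (min q 1)⁻¹ * (((k : ℝ) + 1)⁻¹ * ((k : ℝ) + 1)⁻¹) := by ring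

lemma sub_inv_eq {v u : ℝ} (hv : 0 < v) (hu : 0 < u) (k : ℕ) :
    (v + k)⁻¹ - (u + k)⁻¹ = (u - v) * ((v + k)⁻¹ * (u + k)⁻¹) := by
  have h1 : v + (k : ℝ) ≠ 0 := by positivity
  have h2 : u + (k : ℝ) ≠ 0 := by positivity
  field_simp
  ring

lemma summable_diff {u v : ℝ} (hv : 0 < v) (hu : 0 < u) :
    Summable (fun k : ℕ => (v + k)⁻¹ - (u + k)⁻¹) := by
  refine Summable.congr (((summable_inv_mul_inv hv hu).mul_left (u - v))) fun k => ?_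
  exact (sub_inv_eq hv hu k).symm

lemma summable_one_add_sub {y : ℝ} (hy : 0 < y) :
    Summable (fun k : ℕ => (1 + (k : ℝ))⁻¹ - (y + k)⁻¹) := by
  exact summable_diff one_pos hy
 
lemma cseq_tendsto :
    Tendsto (fun n : ℕ => Real.log n - ∑ m ∈ Finset.range (n + 1), (1 + (m : ℝ))⁻¹)
      atTop (𝓝 (-Real.eulerMascheroniConstant)) := by
  have hH : ∀ N : ℕ, ∑ m ∈ Finset.range N, (1 + (m : ℝ))⁻¹ = ((harmonic N : ℚ) : ℝ) := by
    intro N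
    rw [harmonic]
    push_cast
    exact Finset.sum_congr rfl fun m _ => by rw [add_comm]
  have h1 : Tendsto (fun n : ℕ => ((harmonic (n + 1) : ℚ) : ℝ) - Real.log (n + 1)) atTop
      (𝓝 Real.eulerMascheroniConstant) := by
    have := Real.tendsto_harmonic_sub_log.comp (tendsto_add_atTop_nat 1)
    refine this.congr fun n => ?_
    simp [Function.comp]
  have h2 : Tendsto (fun n : ℕ => Real.log (n + 1) - Real.log n) atTop (𝓝 0) :=
    Real.tendsto_log_nat_add_one_sub_log
  have h3 := (h1.add h2).neg
  rw [add_zero] at h3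
  refine h3.congr fun n => ?_
  rw [hH]
  push_cast
  ring

lemma digamma_eq {y : ℝ} (hy : 0 < y) :
    digamma y = -Real.eulerMascheroniConstant + ∑' k : ℕ, ((1 + (k : ℝ))⁻¹ - (y + k)⁻¹) := by
  set s : Set ℝ := Ioo (y / 2) (y + 1) with hs
  have hys : y ∈ s := ⟨by linarith, by linarith⟩
  set c : ℕ → ℝ := fun n => Real.log n - ∑ m ∈ Finset.range (n + 1), (1 + (m : ℝ))⁻¹ with hc
  set φ : ℕ → ℝ → ℝ := fun m z => (1 + (m : ℝ))⁻¹ - (z + m)⁻¹ with hφ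
  set f : ℕ → ℝ → ℝ := fun n z => Real.BohrMollerup.logGammaSeq z n with hf
  set f' : ℕ → ℝ → ℝ := fun n z => c n + ∑ m ∈ Finset.range (n + 1), φ m z with hf'
  set g' : ℝ → ℝ := fun z => -Real.eulerMascheroniConstant + ∑' m : ℕ, φ m z with hg'
  have hUnif : TendstoUniformlyOn f' g' atTop s := by
      have hconst : TendstoUniformlyOn (fun n (_ : ℝ) => c n)
          (fun _ => -Real.eulerMascheroniConstant) atTop s := by
        rw [Metric.tendstoUniformlyOn_iff]
        intro ε hε
        filter_upwards [Metric.tendsto_nhds.mp cseq_tendsto ε hε] with n hn z hz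
        rwa [dist_comm]
      have hsum : TendstoUniformlyOn (fun n z => ∑ m ∈ Finset.range (n + 1), φ m z)
          (fun z => ∑' m : ℕ, φ m z) atTop s := by
        have hu : Summable (fun m : ℕ => (y + 2) * ((1 + (m : ℝ))⁻¹ * (y / 2 + m)⁻¹)) :=
          (summable_inv_mul_inv one_pos (by linarith : (0:ℝ) < y / 2)).mul_left _
        have hb : ∀ (m : ℕ) (z : ℝ), z ∈ s →
            ‖φ m z‖ ≤ (y + 2) * ((1 + (m : ℝ))⁻¹ * (y / 2 + m)⁻¹) := by
          intro m z hz
          obtain ⟨hz1, hz2⟩ := hz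
          have hz0 : 0 < z := lt_trans (by linarith) hz1
          have he : φ m z = (z - 1) * ((1 + (m : ℝ))⁻¹ * (z + m)⁻¹) := by
            simpa using sub_inv_eq one_pos hz0 m
          rw [he, norm_mul, norm_mul]
          have h1 : ‖z - 1‖ ≤ y + 2 := by
            rw [Real.norm_eq_abs, abs_le]; constructor <;> nlinarith
          have h2 : ‖(z + (m : ℝ))⁻¹‖ ≤ (y / 2 + m)⁻¹ := by
            rw [Real.norm_eq_abs, abs_of_pos (by positivity)]
            apply inv_anti₀ (by positivity)
            nlinarith [Nat.cast_nonneg (α := ℝ) m]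
          have h3 : ‖(1 + (m : ℝ))⁻¹‖ = (1 + (m : ℝ))⁻¹ := by
            rw [Real.norm_eq_abs, abs_of_pos (by positivity)]
          rw [h3]
          exact mul_le_mul h1 (mul_le_mul_of_nonneg_left h2 (by positivity))
            (by positivity) (by linarith)
        have H := tendstoUniformlyOn_tsum_nat hu hb
        intro w hw
        exact (tendsto_add_atTop_nat 1).eventually (H w hw)
      exact hconst.add hsum
  have hDeriv : ∀ᶠ (n : ℕ) in atTop, ∀ z ∈ s, HasDerivAt (f n) (f' n z) z := by
      filter_upwards with n
      intro z hz
      have hz0 : 0 < z := lt_trans (by simpa using (half_pos hy)) hz.1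
      have h1 : HasDerivAt (fun w : ℝ => w * Real.log n + Real.log (Nat.factorial n)) (Real.log n) z :=
        (hasDerivAt_mul_const (Real.log n)).add_const _
      have h3 : HasDerivAt (fun w : ℝ => ∑ m ∈ Finset.range (n + 1), Real.log (w + m))
          (∑ m ∈ Finset.range (n + 1), (z + (m : ℝ))⁻¹) z := by
        apply HasDerivAt.fun_sum
        intro m _
        have : z + (m : ℝ) ≠ 0 := by positivity
        exact (Real.hasDerivAt_log this).comp_add_const
      have h4 := h1.sub h3
      have heq : Real.log n - ∑ m ∈ Finset.range (n + 1), (z + (m : ℝ))⁻¹ = f' n z := by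
        simp only [hf', hc, hφ, Finset.sum_sub_distrib]
        ring
      rw [heq] at h4
      refine h4.congr_of_eventuallyEq ?_
      filter_upwards with w
      simp only [hf, Real.BohrMollerup.logGammaSeq, Pi.sub_apply]
  have hPt : ∀ z ∈ s, Tendsto (fun n => f n z) atTop (𝓝 (Real.log (Real.Gamma z))) := by
      intro z hz
      have hz0 : 0 < z := lt_trans (by simpa using (half_pos hy)) hz.1
      exact Real.BohrMollerup.tendsto_log_gamma hz0
  have key : HasDerivAt (fun z : ℝ => Real.log (Real.Gamma z)) (g' y) y :=
    hasDerivAt_of_tendstoUniformlyOn isOpen_Ioo hUnif hDeriv hPt hys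
  have hdig : digamma y = deriv (fun z : ℝ => Real.log (Real.Gamma z)) y := rfl
  rw [hdig, key.deriv]

lemma digamma_sub {u v : ℝ} (hv : 0 < v) (hvu : v < u) :
    digamma u - digamma v = ∑' k : ℕ, ((v + k)⁻¹ - (u + k)⁻¹) := by
  have hu : 0 < u := hv.trans hvu
  rw [digamma_eq hu, digamma_eq hv]
  have h1 := summable_one_add_sub hu
  have h2 := summable_one_add_sub hv
  rw [show (-Real.eulerMascheroniConstant + ∑' k : ℕ, ((1 + (k : ℝ))⁻¹ - (u + k)⁻¹))
      - (-Real.eulerMascheroniConstant + ∑' k : ℕ, ((1 + (k : ℝ))⁻¹ - (v + k)⁻¹))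
      = (∑' k : ℕ, ((1 + (k : ℝ))⁻¹ - (u + k)⁻¹)) - ∑' k : ℕ, ((1 + (k : ℝ))⁻¹ - (v + k)⁻¹)
      by ring]
  rw [← Summable.tsum_sub h1 h2]
  exact tsum_congr fun k => by ring

lemma integral_exp_neg_mul_Ioi {c : ℝ} (hc : 0 < c) :
    ∫ t in Ioi (0 : ℝ), Real.exp (-c * t) = c⁻¹ := by
  have h := MeasureTheory.integral_comp_mul_left_Ioi (fun u => Real.exp (-u)) 0 hc
  simp only [mul_zero, integral_exp_neg_Ioi, neg_zero, Real.exp_zero, smul_eq_mul,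
    mul_one] at h
  rw [← h]
  exact setIntegral_congr_fun measurableSet_Ioi fun t _ => by rw [neg_mul]

-- The function h(t) = (e^{-vt} - e^{-ut})/(1 - e^{-t}) is integrable on (0,∞).
lemma integrable_ratio {u v : ℝ} (hv : 0 < v) (hvu : v < u) :
    IntegrableOn (fun t : ℝ => (Real.exp (-v * t) - Real.exp (-u * t)) / (1 - Real.exp (-t)))
      (Ioi (0 : ℝ)) := by
  set C : ℝ := (u - v) * Real.exp 1 + (1 - Real.exp (-1))⁻¹ with hC
  have hden1 : (0:ℝ) < 1 - Real.exp (-1) := by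
    have : Real.exp (-1) < 1 := Real.exp_lt_one_iff.mpr (by norm_num)
    linarith
  have hbound : ∀ t ∈ Ioi (0:ℝ),
      ‖(Real.exp (-v * t) - Real.exp (-u * t)) / (1 - Real.exp (-t))‖ ≤ C * Real.exp (-v * t) := by
    intro t ht
    rw [Set.mem_Ioi] at ht
    have hden : 0 < 1 - Real.exp (-t) := by
      have : Real.exp (-t) < 1 := Real.exp_lt_one_iff.mpr (by linarith)
      linarith
    have hnum : 0 ≤ Real.exp (-v * t) - Real.exp (-u * t) := by
      have : Real.exp (-u * t) ≤ Real.exp (-v * t) := Real.exp_le_exp.mpr (by nlinarith)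
      linarith
    rw [Real.norm_eq_abs, abs_of_nonneg (div_nonneg hnum hden.le)]
    have hCnn : 0 ≤ (u - v) * Real.exp 1 := by nlinarith [Real.exp_pos 1]
    rcases le_or_gt t 1 with h1 | h1
    · -- small t : numerator ≤ (u-v) t e^{-vt}, denominator ≥ t e^{-1}
      have hnum2 : Real.exp (-v * t) - Real.exp (-u * t) ≤ (u - v) * t * Real.exp (-v * t) := by
        have : Real.exp (-u * t) = Real.exp (-v * t) * Real.exp (-(u - v) * t) := by
          rw [← Real.exp_add]; ring_nf
        rw [this]
        have h2 : 1 - Real.exp (-(u - v) * t) ≤ (u - v) * t := by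
          have := Real.add_one_le_exp (-(u - v) * t)
          nlinarith
        nlinarith [Real.exp_pos (-v * t)]
      have hden2 : t * Real.exp (-1) ≤ 1 - Real.exp (-t) := by
        have h3 : t + 1 ≤ Real.exp t := Real.add_one_le_exp t
        have h4 : Real.exp (-1) ≤ Real.exp (-t) := Real.exp_le_exp.mpr (by linarith)
        have h5 : t * Real.exp (-t) ≤ 1 - Real.exp (-t) := by
          have := Real.exp_pos (-t)
          have h6 : (t + 1) * Real.exp (-t) ≤ Real.exp t * Real.exp (-t) := by nlinarith
          rw [← Real.exp_add] at h6
          simp at h6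
          nlinarith
        nlinarith
      calc (Real.exp (-v * t) - Real.exp (-u * t)) / (1 - Real.exp (-t))
          ≤ ((u - v) * t * Real.exp (-v * t)) / (t * Real.exp (-1)) := by
            apply div_le_div₀ (by nlinarith [Real.exp_pos (-v * t)]) hnum2 (by positivity) hden2
        _ = (u - v) * Real.exp 1 * Real.exp (-v * t) := by
            rw [Real.exp_neg]
            field_simp
        _ ≤ C * Real.exp (-v * t) := by
            have h7 : (0:ℝ) < (1 - Real.exp (-1))⁻¹ := by positivity
            rw [hC]
            nlinarith [Real.exp_pos (-v * t)]
    · -- large t : numerator ≤ e^{-vt}, denominator ≥ 1 - e^{-1}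
      have hnum2 : Real.exp (-v * t) - Real.exp (-u * t) ≤ Real.exp (-v * t) := by
        have := Real.exp_pos (-u * t); linarith
      have hden2 : 1 - Real.exp (-1) ≤ 1 - Real.exp (-t) := by
        have : Real.exp (-t) ≤ Real.exp (-1) := Real.exp_le_exp.mpr (by linarith)
        linarith
      calc (Real.exp (-v * t) - Real.exp (-u * t)) / (1 - Real.exp (-t))
          ≤ Real.exp (-v * t) / (1 - Real.exp (-1)) := by
            apply div_le_div₀ (by positivity) hnum2 hden1 hden2
        _ = (1 - Real.exp (-1))⁻¹ * Real.exp (-v * t) := by rw [div_eq_inv_mul]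
        _ ≤ C * Real.exp (-v * t) := by
            rw [hC]
            nlinarith [Real.exp_pos (-v * t), hCnn]
  have hint : IntegrableOn (fun t : ℝ => C * Real.exp (-v * t)) (Ioi (0:ℝ)) :=
    (exp_neg_integrableOn_Ioi 0 hv).const_mul C
  refine Integrable.mono hint ?_ ?_
  · apply Measurable.aestronglyMeasurable
    fun_prop
  · rw [ae_restrict_iff' measurableSet_Ioi]
    filter_upwards with t ht
    refine (hbound t ht).trans (le_abs_self _)

lemma integral_ratio {u v : ℝ} (hv : 0 < v) (hvu : v < u) :
    ∫ t in Ioi (0 : ℝ), (Real.exp (-v * t) - Real.exp (-u * t)) / (1 - Real.exp (-t))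
      = ∑' k : ℕ, ((v + k)⁻¹ - (u + k)⁻¹) := by
  have hu : 0 < u := hv.trans hvu
  set F : ℕ → ℝ → ℝ := fun k t => Real.exp (-(v + k) * t) - Real.exp (-(u + k) * t) with hF
  have hFint : ∀ k : ℕ, Integrable (F k) (volume.restrict (Ioi (0:ℝ))) := by
    intro k
    exact (exp_neg_integrableOn_Ioi 0 (by positivity)).sub
      (exp_neg_integrableOn_Ioi 0 (by positivity))
  have hFval : ∀ k : ℕ, ∫ t in Ioi (0:ℝ), F k t = (v + k)⁻¹ - (u + k)⁻¹ := by
    intro k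
    rw [hF]
    rw [integral_sub (exp_neg_integrableOn_Ioi 0 (by positivity))
      (exp_neg_integrableOn_Ioi 0 (by positivity)),
      integral_exp_neg_mul_Ioi (by positivity), integral_exp_neg_mul_Ioi (by positivity)]
  have hFnonneg : ∀ k : ℕ, ∀ t ∈ Ioi (0:ℝ), 0 ≤ F k t := by
    intro k t ht
    rw [Set.mem_Ioi] at ht
    have : Real.exp (-(u + k) * t) ≤ Real.exp (-(v + k) * t) :=
      Real.exp_le_exp.mpr (by nlinarith)
    simp only [hF]
    linarith
  have hFnorm : ∀ k : ℕ, ∫ t in Ioi (0:ℝ), ‖F k t‖ = (v + k)⁻¹ - (u + k)⁻¹ := by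
    intro k
    rw [← hFval k]
    apply setIntegral_congr_fun measurableSet_Ioi
    intro t ht
    exact Real.norm_of_nonneg (hFnonneg k t ht)
  have hsum : Summable fun k : ℕ => ∫ t in Ioi (0:ℝ), ‖F k t‖ := by
    refine (summable_diff hv hu).congr fun k => (hFnorm k).symm
  have key := MeasureTheory.integral_tsum_of_summable_integral_norm hFint hsum
  have hptw : ∀ t ∈ Ioi (0:ℝ),
      (∑' k : ℕ, F k t) = (Real.exp (-v * t) - Real.exp (-u * t)) / (1 - Real.exp (-t)) := by
    intro t ht
    rw [Set.mem_Ioi] at ht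
    have hr0 : (0:ℝ) ≤ Real.exp (-t) := (Real.exp_pos _).le
    have hr1 : Real.exp (-t) < 1 := Real.exp_lt_one_iff.mpr (by linarith)
    have hgeo : Summable fun k : ℕ => Real.exp (-t) ^ k := summable_geometric_of_lt_one hr0 hr1
    have hexp : ∀ (w : ℝ) (k : ℕ), Real.exp (-(w + k) * t) = Real.exp (-w * t) * Real.exp (-t) ^ k := by
      intro w k
      rw [← Real.exp_nat_mul, ← Real.exp_add]
      ring_nf
    have h1 : Summable fun k : ℕ => Real.exp (-(v + k) * t) := by
      refine (hgeo.mul_left (Real.exp (-v * t))).congr fun k => (hexp v k).symm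
    have h2 : Summable fun k : ℕ => Real.exp (-(u + k) * t) := by
      refine (hgeo.mul_left (Real.exp (-u * t))).congr fun k => (hexp u k).symm
    have hv' : ∑' k : ℕ, Real.exp (-(v + k) * t) = Real.exp (-v * t) * (1 - Real.exp (-t))⁻¹ := by
      rw [tsum_congr (fun k => hexp v k), tsum_mul_left, tsum_geometric_of_lt_one hr0 hr1]
    have hu' : ∑' k : ℕ, Real.exp (-(u + k) * t) = Real.exp (-u * t) * (1 - Real.exp (-t))⁻¹ := by
      rw [tsum_congr (fun k => hexp u k), tsum_mul_left, tsum_geometric_of_lt_one hr0 hr1]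
    simp only [hF]
    rw [Summable.tsum_sub h1 h2, hv', hu', div_eq_mul_inv, sub_mul]
  calc ∫ t in Ioi (0:ℝ), (Real.exp (-v * t) - Real.exp (-u * t)) / (1 - Real.exp (-t))
      = ∫ t in Ioi (0:ℝ), ∑' k : ℕ, F k t := by
        exact setIntegral_congr_fun measurableSet_Ioi (fun t ht => (hptw t ht).symm)
    _ = ∑' k : ℕ, ∫ t in Ioi (0:ℝ), F k t := key.symm
    _ = ∑' k : ℕ, ((v + k)⁻¹ - (u + k)⁻¹) := tsum_congr hFval

lemma hasDerivAt_log_Gamma_shift {c x : ℝ} (h : 0 < x + c) :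
    HasDerivAt (fun y : ℝ => Real.log (Real.Gamma (y + c))) (digamma (x + c)) x := by
  have hne : ∀ m : ℕ, x + c ≠ -(m : ℝ) := fun m =>
    ne_of_gt (lt_of_le_of_lt (neg_nonpos.mpr (Nat.cast_nonneg m)) h)
  have hD : DifferentiableAt ℝ (fun z : ℝ => Real.log (Real.Gamma z)) (x + c) :=
    (Real.differentiableAt_Gamma hne).log (Real.Gamma_pos_of_pos h).ne'
  have := hD.hasDerivAt
  exact this.comp_add_const


theorem neg_deriv_log_M_eq_laplace_Phi (a b : ℝ) (hb : 0 < b) (hba : b < a)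
    (x : ℝ) (hx : 0 < x) :
    -(deriv (fun y => Real.log (M a b y)) x)
        = ∫ t in Set.Ioi (0 : ℝ), Real.exp (-x * t) * Phi a b t ∧
    (b - a) / x - digamma (x + b) + digamma (x + a)
        = ∫ t in Set.Ioi (0 : ℝ), Real.exp (-x * t) * Phi a b t := by
  have hvb : 0 < x + b := by linarith
  have hua : 0 < x + a := by linarith
  have hvu : x + b < x + a := by linarith
  -- integral computation
  have hI : ∫ t in Set.Ioi (0 : ℝ), Real.exp (-x * t) * Phi a b t
      = (b - a) * x⁻¹ + (digamma (x + a) - digamma (x + b)) := by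
    have hptw : ∀ t ∈ Ioi (0:ℝ), Real.exp (-x * t) * Phi a b t
        = (b - a) * Real.exp (-x * t)
          + (Real.exp (-(x + b) * t) - Real.exp (-(x + a) * t)) / (1 - Real.exp (-t)) := by
      intro t _
      rw [Phi, mul_add]
      congr 1
      · ring
      · rw [← mul_div_assoc]
        congr 1
        rw [mul_sub, ← Real.exp_add, ← Real.exp_add]
        congr 2 <;> ring
    rw [setIntegral_congr_fun measurableSet_Ioi hptw]
    rw [integral_add ((exp_neg_integrableOn_Ioi 0 hx).const_mul (b - a))
      (integrable_ratio hvb hvu)]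
    rw [integral_const_mul, integral_exp_neg_mul_Ioi hx, integral_ratio hvb hvu,
      ← digamma_sub hvb hvu]
  constructor
  · -- derivative of log M
    have h1 : HasDerivAt (fun y : ℝ => (a - b) * Real.log y) ((a - b) * x⁻¹) x :=
      (Real.hasDerivAt_log hx.ne').const_mul (a - b)
    have h2 := hasDerivAt_log_Gamma_shift (c := b) hvb
    have h3 := hasDerivAt_log_Gamma_shift (c := a) hua
    have h4 := (h1.add h2).sub h3
    have hev : (fun y : ℝ => Real.log (M a b y))
        =ᶠ[𝓝 x] fun y => (a - b) * Real.log y + Real.log (Real.Gamma (y + b))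
          - Real.log (Real.Gamma (y + a)) := by
      filter_upwards [eventually_gt_nhds hx] with y hy
      have hyb : 0 < y + b := by linarith
      have hya : 0 < y + a := by linarith
      rw [M, Real.log_div (mul_ne_zero (Real.rpow_pos_of_pos hy _).ne'
          (Real.Gamma_pos_of_pos hyb).ne') (Real.Gamma_pos_of_pos hya).ne',
        Real.log_mul (Real.rpow_pos_of_pos hy _).ne' (Real.Gamma_pos_of_pos hyb).ne',
        Real.log_rpow hy]
    have h5 : HasDerivAt (fun y : ℝ => Real.log (M a b y))
        ((a - b) * x⁻¹ + digamma (x + b) - digamma (x + a)) x := h4.congr_of_eventuallyEq hev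
    rw [h5.deriv, hI]
    ring
  · rw [hI, div_eq_mul_inv]
    ring
end

section
/- Let 0 < b < a. For every x > 0, log M_{a,b}(x) = ∫₀^∞ e^{-xu} (Φ_{a,b}(u)/u) du. -/
open MeasureTheory Real Set

namespace LogMAux

lemma exp_neg_ge (t : ℝ) : 1 - t ≤ Real.exp (-t) := by
  have := Real.add_one_le_exp (-t); linarith

lemma exp_neg_le_quad {t : ℝ} (ht : 0 ≤ t) : Real.exp (-t) ≤ 1 - t + t ^ 2 / 2 := by
  have key : ∀ s ∈ Set.Ici (0:ℝ),
      HasDerivAt (fun y => 1 - y + y ^ 2 / 2 - Real.exp (-y)) (-1 + s + Real.exp (-s)) s := by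
    intro s _
    have h1 : HasDerivAt (fun y : ℝ => Real.exp (-y)) (-Real.exp (-s)) s := by
      exact ((Real.hasDerivAt_exp (-s)).comp s ((hasDerivAt_id s).neg)).congr_deriv (by simp)
    have h2 : HasDerivAt (fun y : ℝ => 1 - y + y ^ 2 / 2) (-1 + s) s := by
      have := ((hasDerivAt_id s).const_sub 1).add
        (((hasDerivAt_pow 2 s)).div_const 2)
      exact this.congr_deriv (by norm_num)
    exact (h2.sub h1).congr_deriv (by ring)
  have mono : MonotoneOn (fun y => 1 - y + y ^ 2 / 2 - Real.exp (-y)) (Set.Ici (0:ℝ)) := by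
    apply monotoneOn_of_deriv_nonneg (convex_Ici 0)
    · exact (Continuous.continuousOn (by continuity))
    · intro s hs
      rw [interior_Ici] at hs
      exact (key s (Set.mem_Ici.mpr (le_of_lt hs))).differentiableAt.differentiableWithinAt
    · intro s hs
      rw [interior_Ici] at hs
      rw [(key s (Set.mem_Ici.mpr (le_of_lt hs))).deriv]
      have := exp_neg_ge s
      linarith
  have h0 := mono (Set.self_mem_Ici) (Set.mem_Ici.mpr ht) ht
  simp at h0
  linarith

lemma integral_exp_neg_mul_Ioi {s : ℝ} (hs : 0 < s) :
    ∫ u in Ioi (0:ℝ), Real.exp (-(s * u)) = 1 / s := by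
  have := integral_comp_mul_left_Ioi (fun x => Real.exp (-x)) 0 hs
  simp only [mul_zero] at this
  rw [show (fun u => Real.exp (-(s*u))) = fun u => (fun x => Real.exp (-x)) (s * u) from rfl, this,
    integral_exp_neg_Ioi]
  rw [smul_eq_mul]
  field_simp
  simp

lemma frullani {p q : ℝ} (hp : 0 < p) (hpq : p ≤ q) :
    ∫ u in Ioi (0:ℝ), (Real.exp (-(p * u)) - Real.exp (-(q * u))) / u
      = Real.log q - Real.log p := by
  have hq : 0 < q := lt_of_lt_of_le hp hpq
  -- inner identity: for u > 0
  have inner : ∀ u ∈ Ioi (0:ℝ),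
      (∫ s in Ioc p q, Real.exp (-(s * u))) =
        (Real.exp (-(p * u)) - Real.exp (-(q * u))) / u := by
    intro u hu
    rw [mem_Ioi] at hu
    rw [← intervalIntegral.integral_of_le hpq]
    have : ∀ s ∈ Set.uIcc p q, HasDerivAt (fun s => -Real.exp (-(s * u)) / u)
        (Real.exp (-(s * u))) s := by
      intro s _
      have h1 : HasDerivAt (fun s : ℝ => -(s * u)) (-u) s := by
        exact ((hasDerivAt_id s).mul_const u).neg.congr_deriv (by simp)
      have h2 := ((Real.hasDerivAt_exp (-(s*u))).comp s h1).neg.div_const u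
      refine h2.congr_deriv ?_
      rw [mul_neg, neg_neg, mul_div_assoc, div_self (ne_of_gt hu), mul_one]
    rw [intervalIntegral.integral_eq_sub_of_hasDerivAt this]
    · ring
    · apply Continuous.intervalIntegrable; continuity
  rw [← setIntegral_congr_fun measurableSet_Ioi inner]
  -- Fubini
  have hswap : ∫ u in Ioi (0:ℝ), (∫ s in Ioc p q, Real.exp (-(s * u)))
      = ∫ s in Ioc p q, (∫ u in Ioi (0:ℝ), Real.exp (-(s * u))) := by
    apply MeasureTheory.integral_integral_swap
    have hmeas : AEStronglyMeasurable (Function.uncurry fun u s => Real.exp (-(s * u)))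
        ((volume.restrict (Ioi (0:ℝ))).prod (volume.restrict (Ioc p q))) := by
      apply Continuous.aestronglyMeasurable
      apply Real.continuous_exp.comp
      exact (continuous_snd.mul continuous_fst).neg
    have h1 : Integrable (fun u : ℝ => Real.exp (-(p*u))) (volume.restrict (Ioi (0:ℝ))) := by
      have h := exp_neg_integrableOn_Ioi 0 hp; simp only [neg_mul] at h; exact h
    have h2 : Integrable (fun _ : ℝ => (1:ℝ)) (volume.restrict (Ioc p q)) :=
      integrableOn_const measure_Ioc_lt_top.ne
    have hg : Integrable (fun z : ℝ × ℝ => Real.exp (-(p * z.1)))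
        ((volume.restrict (Ioi (0:ℝ))).prod (volume.restrict (Ioc p q))) := by
      simpa using h1.mul_prod h2
    refine hg.mono' hmeas ?_
    rw [Measure.prod_restrict]
    filter_upwards [ae_restrict_mem (measurableSet_Ioi.prod measurableSet_Ioc)] with z hz
    have hu : (0:ℝ) < z.1 := hz.1
    have hs : p ≤ z.2 := hz.2.1.le
    rw [Function.uncurry, Real.norm_eq_abs, abs_of_pos (Real.exp_pos _)]
    exact Real.exp_le_exp.2 (by nlinarith)
  rw [hswap]
  have : ∀ s ∈ Ioc p q, (∫ u in Ioi (0:ℝ), Real.exp (-(s * u))) = 1 / s := by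
    intro s hs; exact integral_exp_neg_mul_Ioi (lt_of_lt_of_le hp hs.1.le)
  rw [setIntegral_congr_fun measurableSet_Ioc this, ← intervalIntegral.integral_of_le hpq,
    integral_one_div (by intro h; rw [Set.uIcc_of_le hpq] at h; exact absurd h.1 (not_le.2 hp) )]
  rw [Real.log_div (ne_of_gt hq) (ne_of_gt hp)]

lemma phi_div_le {a b : ℝ} (hb : 0 < b) (hba : b < a) :
    ∀ u ∈ Ioi (0:ℝ), |Phi a b u / u|
      ≤ (a^2 + b^2 + (a-b)) + ((a-b) + 2/(1 - Real.exp (-1))) := by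
  intro u hu
  rw [mem_Ioi] at hu
  have hD0 : 0 < 1 - Real.exp (-u) := by
    have : Real.exp (-u) < 1 := Real.exp_lt_one_iff.2 (by linarith)
    linarith
  have he1 : (0:ℝ) < 1 - Real.exp (-1) := by
    have : Real.exp (-1) < 1 := Real.exp_lt_one_iff.2 (by norm_num)
    linarith
  have hC2 : (0:ℝ) ≤ (a-b) + 2/(1 - Real.exp (-1)) := by
    have := div_pos (by norm_num : (0:ℝ) < 2) he1; linarith
  have hK : (0:ℝ) ≤ a^2 + b^2 + (a-b) := by nlinarith
  have hphi : Phi a b u = ((b-a)*(1 - Real.exp (-u))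
      + (Real.exp (-b*u) - Real.exp (-a*u))) / (1 - Real.exp (-u)) := by
    rw [Phi]; field_simp
  rcases le_or_gt u 1 with h1 | h1
  · -- small u
    have hbu : (0:ℝ) ≤ b*u := by nlinarith
    have hau : (0:ℝ) ≤ a*u := by nlinarith
    have rb1 : 1 - b*u ≤ Real.exp (-(b*u)) := exp_neg_ge _
    have rb2 : Real.exp (-(b*u)) ≤ 1 - b*u + (b*u)^2/2 := exp_neg_le_quad hbu
    have ra1 : 1 - a*u ≤ Real.exp (-(a*u)) := exp_neg_ge _
    have ra2 : Real.exp (-(a*u)) ≤ 1 - a*u + (a*u)^2/2 := exp_neg_le_quad hau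
    have r11 : 1 - u ≤ Real.exp (-u) := exp_neg_ge _
    have r12 : Real.exp (-u) ≤ 1 - u + u^2/2 := exp_neg_le_quad hu.le
    have hDlow : u/2 ≤ 1 - Real.exp (-u) := by nlinarith
    have hnum : |(b-a)*(1 - Real.exp (-u)) + (Real.exp (-b*u) - Real.exp (-a*u))|
        ≤ (a^2 + b^2 + (a-b)) * u^2 / 2 := by
      rw [abs_le, neg_mul, neg_mul]
      constructor <;> nlinarith
    have hphile : |Phi a b u| ≤ (a^2 + b^2 + (a-b)) * u := by
      rw [hphi, abs_div, abs_of_pos hD0, div_le_iff₀ hD0]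
      calc |(b-a)*(1 - Real.exp (-u)) + (Real.exp (-b*u) - Real.exp (-a*u))|
          ≤ (a^2 + b^2 + (a-b)) * u^2 / 2 := hnum
        _ = ((a^2 + b^2 + (a-b)) * u) * (u/2) := by ring
        _ ≤ ((a^2 + b^2 + (a-b)) * u) * (1 - Real.exp (-u)) :=
            mul_le_mul_of_nonneg_left hDlow (by nlinarith)
        _ = (a^2 + b^2 + (a-b)) * u * (1 - Real.exp (-u)) := by ring
    have : |Phi a b u / u| ≤ a^2 + b^2 + (a-b) := by
      rw [abs_div, abs_of_pos hu, div_le_iff₀ hu]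
      calc |Phi a b u| ≤ (a^2 + b^2 + (a-b)) * u := hphile
        _ = (a^2 + b^2 + (a-b)) * u := rfl
    linarith
  · -- large u
    have hDlow : 1 - Real.exp (-1) ≤ 1 - Real.exp (-u) := by
      have : Real.exp (-u) ≤ Real.exp (-1) := Real.exp_le_exp.2 (by linarith)
      linarith
    have hb1 : Real.exp (-b*u) ≤ 1 := Real.exp_le_one_iff.2 (by nlinarith)
    have ha1 : Real.exp (-a*u) ≤ 1 := Real.exp_le_one_iff.2 (by nlinarith)
    have hphile : |Phi a b u| ≤ (a-b) + 2/(1 - Real.exp (-1)) := by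
      rw [Phi]
      refine (abs_add_le _ _).trans ?_
      have h2 : |(Real.exp (-b*u) - Real.exp (-a*u)) / (1 - Real.exp (-u))|
          ≤ 2/(1 - Real.exp (-1)) := by
        rw [abs_div, abs_of_pos hD0]
        refine div_le_div₀ (by norm_num) ?_ he1 hDlow
        rw [abs_le]
        constructor <;> nlinarith [Real.exp_pos (-b*u), Real.exp_pos (-a*u)]
      have h3 : |b - a| = a - b := by rw [abs_of_neg (by linarith)]; ring
      rw [h3]; linarith
    have : |Phi a b u / u| ≤ (a-b) + 2/(1 - Real.exp (-1)) := by
      rw [abs_div, abs_of_pos hu]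
      exact (div_le_self (abs_nonneg _) (by linarith)).trans hphile
    linarith

lemma key_pointwise (a b x : ℝ) (n : ℕ) {u : ℝ} (hu : 0 < u) :
    (1 - Real.exp (-((n:ℝ)*u))) * (Real.exp (-(x*u)) * (Phi a b u / u))
      = (∑ k ∈ Finset.range n,
          (Real.exp (-((x+b+k)*u)) - Real.exp (-((x+a+k)*u)))/u)
        + (b-a) * ((Real.exp (-(x*u)) - Real.exp (-((x+(n:ℝ))*u)))/u) := by
  have hr : Real.exp (-u) < 1 := Real.exp_lt_one_iff.2 (by linarith)
  have hr1 : Real.exp (-u) ≠ 1 := ne_of_lt hr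
  have hsplit : ∀ c : ℝ, ∀ k : ℕ, Real.exp (-((c+k)*u))
      = Real.exp (-(c*u)) * (Real.exp (-u))^k := by
    intro c k
    rw [← Real.exp_nat_mul, ← Real.exp_add]
    congr 1; ring
  have hsplit2 : ∀ c d : ℝ, Real.exp (-((c+d)*u)) = Real.exp (-(c*u)) * Real.exp (-(d*u)) := by
    intro c d; rw [← Real.exp_add]; congr 1; ring
  have hterm : ∀ k ∈ Finset.range n,
      (Real.exp (-((x+b+k)*u)) - Real.exp (-((x+a+k)*u)))/u
        = ((Real.exp (-(x*u)) * Real.exp (-(b*u)) - Real.exp (-(x*u)) * Real.exp (-(a*u)))/u)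
            * (Real.exp (-u))^k := by
    intro k _
    rw [hsplit (x+b) k, hsplit (x+a) k, hsplit2 x b, hsplit2 x a]
    ring
  rw [Finset.sum_congr rfl hterm, ← Finset.mul_sum, geom_sum_eq hr1,
    hsplit2 x (n:ℝ), show Real.exp (-((n:ℝ)*u)) = (Real.exp (-u))^n by
      rw [← Real.exp_nat_mul]; congr 1; ring]
  rw [Phi, show -b*u = -(b*u) by ring, show -a*u = -(a*u) by ring]
  have h1r : 1 - Real.exp (-u) ≠ 0 := by
    intro h; apply hr1; linarith [sub_eq_zero.1 h]
  have hr1' : Real.exp (-u) - 1 ≠ 0 := sub_ne_zero.2 hr1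
  field_simp
  ring

lemma frullani_integrable {p q : ℝ} (hp : 0 < p) (hpq : p ≤ q) :
    IntegrableOn (fun u => (Real.exp (-(p * u)) - Real.exp (-(q * u))) / u)
      (Ioi (0:ℝ)) := by
  have hmeas : AEStronglyMeasurable
      (fun u => (Real.exp (-(p * u)) - Real.exp (-(q * u))) / u)
      (volume.restrict (Ioi (0:ℝ))) := by
    apply ContinuousOn.aestronglyMeasurable _ measurableSet_Ioi
    exact ((Real.continuous_exp.comp (by continuity)).sub
      (Real.continuous_exp.comp (by continuity))).continuousOn.div
      continuousOn_id (fun u hu => ne_of_gt hu)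
  have h0 : IntegrableOn (fun u : ℝ => Real.exp (-p * u)) (Ioi 0) volume :=
    exp_neg_integrableOn_Ioi 0 hp
  have h0' : IntegrableOn (fun u : ℝ => Real.exp (-(p * u))) (Ioi 0) volume := by
    simpa [neg_mul] using h0
  have hdom : Integrable (fun u => (q - p) * Real.exp (-(p * u)))
      (volume.restrict (Ioi (0:ℝ))) := h0'.const_mul _
  refine hdom.mono' hmeas ?_
  filter_upwards [ae_restrict_mem measurableSet_Ioi] with u hu
  rw [mem_Ioi] at hu
  have hqp : Real.exp (-(q*u)) = Real.exp (-(p*u)) * Real.exp (-((q-p)*u)) := by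
    rw [← Real.exp_add]; congr 1; ring
  have h1 : Real.exp (-((q-p)*u)) ≤ 1 := Real.exp_le_one_iff.2 (by nlinarith)
  have h2 : 1 - (q-p)*u ≤ Real.exp (-((q-p)*u)) := exp_neg_ge _
  have hE : 0 < Real.exp (-(p*u)) := Real.exp_pos _
  rw [Real.norm_eq_abs, abs_div, abs_of_pos hu, div_le_iff₀ hu, abs_le]
  constructor <;> nlinarith

lemma log_gammaSeq {s : ℝ} (hs : 0 < s) {n : ℕ} (hn : 1 ≤ n) :
    Real.log (Real.GammaSeq s n) = s * Real.log n + Real.log (Nat.factorial n : ℝ)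
      - ∑ j ∈ Finset.range (n+1), Real.log (s + j) := by
  have hn0 : (0:ℝ) < n := by exact_mod_cast hn
  have hfac : (0:ℝ) < (Nat.factorial n : ℝ) := by exact_mod_cast Nat.factorial_pos n
  have hterm : ∀ j ∈ Finset.range (n+1), (0:ℝ) < s + (j:ℝ) := by
    intro j _; positivity
  have hprod : (0:ℝ) < ∏ j ∈ Finset.range (n+1), (s + (j:ℝ)) :=
    Finset.prod_pos hterm
  rw [Real.GammaSeq, Real.log_div (by positivity) (ne_of_gt hprod),
    Real.log_mul (by positivity) (ne_of_gt hfac), Real.log_rpow hn0,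
    Real.log_prod (fun j hj => ne_of_gt (hterm j hj))]

lemma phi_continuousOn (x a b : ℝ) :
    ContinuousOn (fun u => Real.exp (-x * u) * (Phi a b u / u)) (Ioi (0:ℝ)) := by
  have h1 : ContinuousOn (fun u : ℝ => Phi a b u) (Ioi 0) := by
    unfold Phi
    refine ContinuousOn.add continuousOn_const (ContinuousOn.div ?_ ?_ ?_)
    · exact Continuous.continuousOn (by continuity)
    · exact Continuous.continuousOn (by continuity)
    · intro u hu
      have hu' : (0:ℝ) < u := hu
      have : Real.exp (-u) < 1 := Real.exp_lt_one_iff.2 (by linarith)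
      intro h; have := sub_eq_zero.1 h; linarith
  have h2 : ContinuousOn (fun u : ℝ => u) (Ioi 0) := continuous_id.continuousOn
  exact (Continuous.continuousOn (by continuity)).mul
    (h1.div h2 (fun u hu => ne_of_gt hu))

end LogMAux

open LogMAux

theorem log_M_eq_laplace_Phi_div (a b : ℝ) (hb : 0 < b) (hba : b < a)
    (x : ℝ) (hx : 0 < x) :
    Real.log (M a b x) = ∫ u in Set.Ioi (0 : ℝ), Real.exp (-x * u) * (Phi a b u / u) := by
  have hxa : 0 < x + a := by linarith
  have hxb : 0 < x + b := by linarith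
  set C : ℝ := (a^2 + b^2 + (a-b)) + ((a-b) + 2/(1 - Real.exp (-1))) with hC
  set f : ℝ → ℝ := fun u => Real.exp (-x * u) * (Phi a b u / u) with hf
  have hfmeas : AEStronglyMeasurable f (volume.restrict (Ioi 0)) :=
    (phi_continuousOn x a b).aestronglyMeasurable measurableSet_Ioi
  have hfint : IntegrableOn f (Ioi 0) := by
    have h0 : IntegrableOn (fun u : ℝ => Real.exp (-x * u)) (Ioi 0) volume :=
      exp_neg_integrableOn_Ioi 0 hx
    refine (h0.const_mul C).mono' hfmeas ?_
    filter_upwards [ae_restrict_mem measurableSet_Ioi] with u hu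
    have hbd := phi_div_le hb hba u hu
    have hE : 0 < Real.exp (-x*u) := Real.exp_pos _
    rw [hf, Real.norm_eq_abs]
    calc |Real.exp (-x*u) * (Phi a b u / u)|
        = Real.exp (-x*u) * |Phi a b u / u| := by rw [abs_mul, abs_of_pos hE]
      _ ≤ Real.exp (-x*u) * C := mul_le_mul_of_nonneg_left hbd hE.le
      _ = C * Real.exp (-x*u) := mul_comm _ _
  -- approximating sequence
  set F : ℕ → ℝ → ℝ := fun n u => (1 - Real.exp (-((n:ℝ)*u))) * f u with hF
  have hFtend : Filter.Tendsto (fun n => ∫ u in Ioi (0:ℝ), F n u) Filter.atTop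
      (nhds (∫ u in Ioi (0:ℝ), f u)) := by
    refine MeasureTheory.tendsto_integral_of_dominated_convergence
      (fun u => |f u|) (fun n => ?_) hfint.abs (fun n => ?_) ?_
    · exact ((continuous_const.sub
        (Real.continuous_exp.comp (by continuity))).aestronglyMeasurable).mul hfmeas
    · filter_upwards [ae_restrict_mem measurableSet_Ioi] with u hu
      have hu' : (0:ℝ) < u := hu
      have h1 : Real.exp (-((n:ℝ)*u)) ≤ 1 := Real.exp_le_one_iff.2 (neg_nonpos.2 (by positivity))
      have h2 : 0 < Real.exp (-((n:ℝ)*u)) := Real.exp_pos _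
      rw [hF, Real.norm_eq_abs, abs_mul]
      have : |1 - Real.exp (-((n:ℝ)*u))| ≤ 1 := by rw [abs_le]; constructor <;> linarith
      calc |1 - Real.exp (-((n:ℝ)*u))| * |f u| ≤ 1 * |f u| :=
            mul_le_mul_of_nonneg_right this (abs_nonneg _)
        _ = |f u| := one_mul _
    · filter_upwards [ae_restrict_mem measurableSet_Ioi] with u hu
      have hu' : (0:ℝ) < u := hu
      have hrn : ∀ n : ℕ, Real.exp (-((n:ℝ)*u)) = (Real.exp (-u))^n := by
        intro n; rw [← Real.exp_nat_mul]; congr 1; ring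
      have hpow : Filter.Tendsto (fun n : ℕ => (Real.exp (-u))^n) Filter.atTop (nhds 0) :=
        tendsto_pow_atTop_nhds_zero_of_lt_one (Real.exp_pos _).le
          (Real.exp_lt_one_iff.2 (by linarith))
      have : Filter.Tendsto (fun n : ℕ => (1 - (Real.exp (-u))^n) * f u) Filter.atTop
          (nhds ((1 - 0) * f u)) :=
        ((tendsto_const_nhds.sub hpow).mul tendsto_const_nhds)
      simp only [sub_zero, one_mul] at this
      refine this.congr (fun n => ?_)
      show (1 - Real.exp (-u) ^ n) * f u = (1 - Real.exp (-((n:ℝ) * u))) * f u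
      rw [hrn n]
  -- value of the approximating integrals
  have hFval : ∀ n : ℕ, ∫ u in Ioi (0:ℝ), F n u
      = (∑ k ∈ Finset.range n, (Real.log (x+a+k) - Real.log (x+b+k)))
        + (b-a) * (Real.log (x+(n:ℝ)) - Real.log x) := by
    intro n
    have hEq : EqOn (F n)
        (fun u => (∑ k ∈ Finset.range n,
            (Real.exp (-((x+b+k)*u)) - Real.exp (-((x+a+k)*u)))/u)
          + (b-a) * ((Real.exp (-(x*u)) - Real.exp (-((x+(n:ℝ))*u)))/u)) (Ioi 0) := by
      intro u hu
      have hu' : (0:ℝ) < u := hu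
      rw [hF, hf]
      simp only
      rw [show -x*u = -(x*u) by ring]
      exact key_pointwise a b x n hu'
    have hint1 : ∀ k ∈ Finset.range n, IntegrableOn
        (fun u => (Real.exp (-((x+b+k)*u)) - Real.exp (-((x+a+k)*u)))/u) (Ioi (0:ℝ)) := by
      intro k _
      exact frullani_integrable (by positivity) (by linarith)
    have hint2 : IntegrableOn
        (fun u => (Real.exp (-(x*u)) - Real.exp (-((x+(n:ℝ))*u)))/u) (Ioi (0:ℝ)) :=
      frullani_integrable hx (by linarith [(n.cast_nonneg : (0:ℝ) ≤ n)])
    rw [MeasureTheory.setIntegral_congr_fun measurableSet_Ioi hEq,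
      MeasureTheory.integral_add (MeasureTheory.integrable_finset_sum _ hint1)
        (hint2.const_mul _),
      MeasureTheory.integral_finset_sum _ hint1, MeasureTheory.integral_const_mul]
    congr 1
    · refine Finset.sum_congr rfl (fun k _ => ?_)
      exact frullani (by positivity) (by linarith)
    · rw [frullani hx (by linarith [(n.cast_nonneg : (0:ℝ) ≤ n)])]
  -- the limit of the explicit sums is log M
  have hIlim : Filter.Tendsto (fun n : ℕ =>
      (∑ k ∈ Finset.range n, (Real.log (x+a+k) - Real.log (x+b+k)))
        + (b-a) * (Real.log (x+(n:ℝ)) - Real.log x)) Filter.atTop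
      (nhds (Real.log (M a b x))) := by
    have hGb := (Real.Gamma_pos_of_pos hxb).ne'
    have hGa := (Real.Gamma_pos_of_pos hxa).ne'
    have hD : Filter.Tendsto (fun n : ℕ => Real.log (Real.GammaSeq (x+b) n)
        - Real.log (Real.GammaSeq (x+a) n)) Filter.atTop
        (nhds (Real.log (Real.Gamma (x+b)) - Real.log (Real.Gamma (x+a)))) :=
      ((Real.GammaSeq_tendsto_Gamma (x+b)).log hGb).sub
        ((Real.GammaSeq_tendsto_Gamma (x+a)).log hGa)
    have htop : Filter.Tendsto (fun n : ℕ => x + b + (n:ℝ)) Filter.atTop Filter.atTop :=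
      Filter.tendsto_atTop_add_const_left _ _ tendsto_natCast_atTop_atTop
    have t1 : Filter.Tendsto (fun n : ℕ => Real.log (x+a+(n:ℝ)) - Real.log (x+b+(n:ℝ)))
        Filter.atTop (nhds 0) := by
      have hratio : Filter.Tendsto (fun n : ℕ => 1 + (a-b) * (x+b+(n:ℝ))⁻¹)
          Filter.atTop (nhds 1) := by
        have h2 := Filter.Tendsto.const_mul (a-b) (htop.inv_tendsto_atTop)
        have h3 : Filter.Tendsto (fun n : ℕ => 1 + (a-b) * (x+b+(n:ℝ))⁻¹)
            Filter.atTop (nhds (1 + (a-b) * 0)) :=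
          Filter.Tendsto.add tendsto_const_nhds h2
        simpa using h3
      have hlog := hratio.log one_ne_zero
      rw [Real.log_one] at hlog
      refine hlog.congr (fun n => ?_)
      have h1 : (0:ℝ) < x+b+(n:ℝ) := by positivity
      have h2 : (0:ℝ) < x+a+(n:ℝ) := by positivity
      rw [show 1 + (a-b)*(x+b+(n:ℝ))⁻¹ = (x+a+(n:ℝ))/(x+b+(n:ℝ)) by field_simp; ring,
        Real.log_div (ne_of_gt h2) (ne_of_gt h1)]
    have t2 : Filter.Tendsto (fun n : ℕ => Real.log (x+(n:ℝ)) - Real.log (n:ℝ))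
        Filter.atTop (nhds 0) := by
      have hratio : Filter.Tendsto (fun n : ℕ => 1 + x * ((n:ℝ))⁻¹)
          Filter.atTop (nhds 1) := by
        have h2 := Filter.Tendsto.const_mul x
          ((tendsto_natCast_atTop_atTop (R := ℝ)).inv_tendsto_atTop)
        have h3 : Filter.Tendsto (fun n : ℕ => 1 + x * ((n:ℝ))⁻¹)
            Filter.atTop (nhds (1 + x * 0)) :=
          Filter.Tendsto.add tendsto_const_nhds h2
        simpa using h3
      have hlog := hratio.log one_ne_zero
      rw [Real.log_one] at hlog
      refine hlog.congr' ?_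
      filter_upwards [Filter.eventually_ge_atTop 1] with n hn
      have h1 : (0:ℝ) < (n:ℝ) := by exact_mod_cast hn
      have h2 : (0:ℝ) < x+(n:ℝ) := by positivity
      rw [show 1 + x*((n:ℝ))⁻¹ = (x+(n:ℝ))/(n:ℝ) by field_simp; ring,
        Real.log_div (ne_of_gt h2) (ne_of_gt h1)]
    have hRHS : Filter.Tendsto (fun n : ℕ =>
        ((Real.log (Real.GammaSeq (x+b) n) - Real.log (Real.GammaSeq (x+a) n))
          - (Real.log (x+a+(n:ℝ)) - Real.log (x+b+(n:ℝ))))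
        + ((b-a) * (Real.log (x+(n:ℝ)) - Real.log (n:ℝ)) - (b-a) * Real.log x))
        Filter.atTop
        (nhds (((Real.log (Real.Gamma (x+b)) - Real.log (Real.Gamma (x+a))) - 0)
          + ((b-a) * 0 - (b-a) * Real.log x))) :=
      (hD.sub t1).add ((t2.const_mul (b-a)).sub tendsto_const_nhds)
    have hM : Real.log (M a b x) = ((Real.log (Real.Gamma (x+b))
        - Real.log (Real.Gamma (x+a))) - 0) + ((b-a) * 0 - (b-a) * Real.log x) := by
      have hrp : (0:ℝ) < x ^ (a-b) := Real.rpow_pos_of_pos hx _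
      rw [M, Real.log_div (mul_ne_zero (ne_of_gt hrp) hGb) hGa,
        Real.log_mul (ne_of_gt hrp) hGb, Real.log_rpow hx]
      ring
    rw [hM]
    refine hRHS.congr' ?_
    filter_upwards [Filter.eventually_ge_atTop 1] with n hn
    rw [log_gammaSeq hxb hn, log_gammaSeq hxa hn,
      Finset.sum_range_succ (fun j : ℕ => Real.log (x+b+(j:ℝ))) n,
      Finset.sum_range_succ (fun j : ℕ => Real.log (x+a+(j:ℝ))) n,
      Finset.sum_sub_distrib]
    ring
  have h1 : Filter.Tendsto (fun n : ℕ =>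
      (∑ k ∈ Finset.range n, (Real.log (x+a+k) - Real.log (x+b+k)))
        + (b-a) * (Real.log (x+(n:ℝ)) - Real.log x)) Filter.atTop
      (nhds (∫ u in Ioi (0:ℝ), f u)) := hFtend.congr hFval
  exact tendsto_nhds_unique hIlim h1
end

section
/- Let (a,b) satisfy 0 < b < a and a > 1. Then the function x ↦ -log M_{a,b}(x) belongs to the generalized Stieltjes class S_2, i.e. there exist a nonnegative Borel measure μ on [0,∞) and a constant c ≥ 0 such that -log M_{a,b}(x) = ∫_{[0,∞)} (x+t)^{-2} dμ(t) + c for all x > 0. -/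
open MeasureTheory Real Set

/-- `g` is a generalized Stieltjes function of order `lam`: there are a nonnegative Borel
measure `μ` on `[0,∞)` and a constant `c ≥ 0` with `g x = ∫ (x+t)^{-lam} dμ(t) + c` for
all `x > 0` (with the integral finite). -/
def IsGenStieltjes (lam : ℝ) (g : ℝ → ℝ) : Prop :=
  ∃ (μ : MeasureTheory.Measure ℝ) (c : ℝ),
    μ (Set.Iio 0) = 0 ∧ 0 ≤ c ∧
    ∀ x : ℝ, 0 < x →
      MeasureTheory.Integrable (fun t => (x + t) ^ (-lam)) μ ∧
      g x = (∫ t, (x + t) ^ (-lam) ∂μ) + c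

open Filter Topology

noncomputable def rho (a b t : ℝ) : ℝ :=
  (a - b) * min (max t 0) 1 - min (max t 0) a + min (max t 0) b

lemma rho_continuous (a b : ℝ) : Continuous (rho a b) := by
  unfold rho; fun_prop

lemma rho_nonneg {a b : ℝ} (hb : 0 < b) (hba : b < a) (ha : 1 < a) (t : ℝ) :
    0 ≤ rho a b t := by
  unfold rho
  set s := max t 0 with hs
  have h0 : 0 ≤ s := le_max_right _ _
  simp only [min_def]
  split_ifs <;> nlinarith [mul_nonneg h0 (sub_pos.2 hba).le, mul_nonneg h0 (sub_pos.2 ha).le]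

lemma rho_eq_zero_of_nonpos {a b : ℝ} (hb : 0 < b) (hba : b < a) (ha : 1 < a) {t : ℝ}
    (ht : t ≤ 0) : rho a b t = 0 := by
  unfold rho
  rw [max_eq_right ht]
  rw [min_eq_left zero_le_one, min_eq_left (by linarith), min_eq_left hb.le]
  ring

lemma rho_eq_zero_of_ge {a b : ℝ} (hb : 0 < b) (hba : b < a) (ha : 1 < a) {t : ℝ}
    (ht : a ≤ t) : rho a b t = 0 := by
  unfold rho
  rw [max_eq_left (by linarith), min_eq_right (by linarith), min_eq_right ht,
    min_eq_right (by linarith)]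
  ring
open MeasureTheory Real Set intervalIntegral

noncomputable def Tfun (a b x : ℝ) : ℝ :=
  (a - b) * (Real.log (x + 1) - Real.log x) - (Real.log (x + a) - Real.log (x + b))

lemma contOn_aux {y : ℝ} (hy : 0 < y) (f : ℝ → ℝ) (hf : Continuous f) :
    ContinuousOn (fun t => f t / (y + t) ^ 2) (Ici 0) := by
  apply hf.continuousOn.div (by fun_prop)
  intro t ht
  have : 0 < y + t := by simp only [mem_Ici] at ht; linarith
  positivity

lemma intervalIntegrable_aux {y c d : ℝ} (hy : 0 < y) (hc : 0 ≤ c) (hd : 0 ≤ d)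
    (f : ℝ → ℝ) (hf : Continuous f) :
    IntervalIntegrable (fun t => f t / (y + t) ^ 2) volume c d := by
  apply ContinuousOn.intervalIntegrable
  apply (contOn_aux hy f hf).mono
  rw [uIcc_eq_union]
  rintro t (ht | ht) <;> exact le_trans (by positivity) ht.1

lemma integral_min {y v A : ℝ} (hy : 0 < y) (hv : 0 < v) (hvA : v ≤ A) :
    ∫ t in (0:ℝ)..A, min t v / (y + t) ^ 2
      = Real.log (y + v) - Real.log y - v / (y + A) := by
  have hA : (0:ℝ) ≤ A := le_trans hv.le hvA
  have key : ∀ t : ℝ, 0 ≤ t → 0 < y + t := fun t ht => by linarith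
  rw [← intervalIntegral.integral_add_adjacent_intervals
      (a := (0:ℝ)) (b := v) (c := A)
      (intervalIntegrable_aux hy le_rfl hv.le (fun t => min t v) (by fun_prop))
      (intervalIntegrable_aux hy hv.le hA (fun t => min t v) (by fun_prop))]
  have h1 : ∫ t in (0:ℝ)..v, min t v / (y + t) ^ 2 = ∫ t in (0:ℝ)..v, t / (y + t) ^ 2 := by
    apply intervalIntegral.integral_congr
    intro t ht
    rw [uIcc_of_le hv.le] at ht
    simp [min_eq_left ht.2]
  have h2 : ∫ t in v..A, min t v / (y + t) ^ 2 = ∫ t in v..A, v / (y + t) ^ 2 := by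
    apply intervalIntegral.integral_congr
    intro t ht
    rw [uIcc_of_le hvA] at ht
    simp [min_eq_right ht.1]
  have e1 : ∫ t in (0:ℝ)..v, t / (y + t) ^ 2
      = (Real.log (y + v) + y / (y + v)) - (Real.log (y + 0) + y / (y + 0)) := by
    apply intervalIntegral.integral_eq_sub_of_hasDerivAt
    · intro t ht
      rw [uIcc_of_le hv.le] at ht
      have hyt : 0 < y + t := key t ht.1
      have d1 : HasDerivAt (fun u => Real.log (y + u)) (1 / (y + t)) t := by
        have := (Real.hasDerivAt_log hyt.ne').comp t ((hasDerivAt_id t).const_add y)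
        exact this.congr_deriv (by simp [one_div])
      have d2 : HasDerivAt (fun u => y / (y + u)) (y * (-1 / (y + t) ^ 2)) t := by
        have hinv : HasDerivAt (fun u => (y + u)⁻¹) (-1 / (y + t) ^ 2) t := by
          have := ((hasDerivAt_id t).const_add y).inv hyt.ne'
          exact this.congr_deriv (by simp)
        simpa [div_eq_mul_inv] using hinv.const_mul y
      have := d1.add d2
      convert this using 1
      · rfl
      field_simp
      ring
    · exact intervalIntegrable_aux hy le_rfl hv.le (fun t => t) (by fun_prop)
  have e2 : ∫ t in v..A, v / (y + t) ^ 2 = (-(v / (y + A))) - (-(v / (y + v))) := by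
    apply intervalIntegral.integral_eq_sub_of_hasDerivAt
    · intro t ht
      rw [uIcc_of_le hvA] at ht
      have hyt : 0 < y + t := key t (le_trans hv.le ht.1)
      have hinv : HasDerivAt (fun u => (y + u)⁻¹) (-1 / (y + t) ^ 2) t := by
        have := ((hasDerivAt_id t).const_add y).inv hyt.ne'
        exact this.congr_deriv (by simp)
      have := (hinv.const_mul v).neg
      convert this using 1
      · funext u; simp only [Pi.neg_apply, div_eq_mul_inv]
      field_simp
    · exact intervalIntegrable_aux hy hv.le hA (fun _ => v) (by fun_prop)
  rw [h1, h2, e1, e2]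
  have hyv : 0 < y + v := key v hv.le
  field_simp
  ring

lemma T_integral {a b y : ℝ} (hb : 0 < b) (hba : b < a) (ha : 1 < a) (hy : 0 < y) :
    ∫ t in (0:ℝ)..a, rho a b t / (y + t) ^ 2 = Tfun a b y := by
  have h0a : (0:ℝ) ≤ a := by linarith
  have hcong : ∫ t in (0:ℝ)..a, rho a b t / (y + t) ^ 2
      = ∫ t in (0:ℝ)..a,
          ((a - b) * (min t 1 / (y + t) ^ 2) - min t a / (y + t) ^ 2 + min t b / (y + t) ^ 2) := by
    apply intervalIntegral.integral_congr
    intro t ht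
    rw [uIcc_of_le h0a] at ht
    simp only [rho, max_eq_left ht.1]
    ring
  have i1 := intervalIntegrable_aux hy le_rfl h0a (fun t => min t 1) (by fun_prop)
  have i2 := intervalIntegrable_aux hy le_rfl h0a (fun t => min t a) (by fun_prop)
  have i3 := intervalIntegrable_aux hy le_rfl h0a (fun t => min t b) (by fun_prop)
  rw [hcong, intervalIntegral.integral_add ((i1.const_mul _).sub i2) i3,
    intervalIntegral.integral_sub (i1.const_mul _) i2,
    intervalIntegral.integral_const_mul,
    integral_min hy one_pos ha.le, integral_min hy (hb.trans hba) le_rfl,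
    integral_min hy hb hba.le]
  unfold Tfun
  ring

open Nat in
lemma log_gammaSeq {s : ℝ} (hs : 0 < s) {n : ℕ} (hn : 1 ≤ n) :
    Real.log (Real.GammaSeq s n)
      = s * Real.log n + Real.log (n !) - ∑ j ∈ Finset.range (n + 1), Real.log (s + j) := by
  have hn0 : (0:ℝ) < n := by exact_mod_cast hn
  have hprod : ∀ j ∈ Finset.range (n + 1), s + (j : ℝ) ≠ 0 := by
    intro j _; positivity
  rw [Real.GammaSeq, Real.log_div (mul_ne_zero (Real.rpow_pos_of_pos hn0 s).ne'
      (by exact_mod_cast n.factorial_ne_zero : ((n ! : ℝ)) ≠ 0))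
      (Finset.prod_ne_zero_iff.2 hprod),
    Real.log_mul (Real.rpow_pos_of_pos hn0 s).ne'
      (by exact_mod_cast n.factorial_ne_zero : ((n ! : ℝ)) ≠ 0),
    Real.log_rpow hn0, Real.log_prod hprod]

lemma Tfun_nonneg {a b y : ℝ} (hb : 0 < b) (hba : b < a) (ha : 1 < a) (hy : 0 < y) :
    0 ≤ Tfun a b y := by
  rw [← T_integral hb hba ha hy]
  apply intervalIntegral.integral_nonneg (by linarith : (0:ℝ) ≤ a)
  intro t ht
  have h1 : 0 < y + t := by have := ht.1; linarith
  exact div_nonneg (rho_nonneg hb hba ha t) (by positivity)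

lemma hasSum_Tfun {a b x : ℝ} (hb : 0 < b) (hba : b < a) (ha : 1 < a) (hx : 0 < x) :
    HasSum (fun k : ℕ => Tfun a b (x + k))
      (Real.log (Real.Gamma (x + a)) - Real.log (Real.Gamma (x + b)) - (a - b) * Real.log x) := by
  have hnn : ∀ k : ℕ, 0 ≤ Tfun a b (x + k) := fun k => Tfun_nonneg hb hba ha (by positivity)
  rw [hasSum_iff_tendsto_nat_of_nonneg hnn]
  set D : ℕ → ℝ := fun n =>
    Real.log (Real.GammaSeq (x + a) n) - Real.log (Real.GammaSeq (x + b) n) with hDdef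
  have tele : ∀ m : ℕ, ∑ k ∈ Finset.range m, (Real.log (x + k + 1) - Real.log (x + k))
      = Real.log (x + m) - Real.log x := by
    intro m
    have h := Finset.sum_range_sub (f := fun k : ℕ => Real.log (x + k)) m
    simp only [Nat.cast_zero, add_zero] at h
    rw [← h]
    apply Finset.sum_congr rfl
    intro k _
    push_cast
    ring_nf
  have hGS : ∀ n : ℕ, 1 ≤ n → ∑ k ∈ Finset.range (n + 1),
        (Real.log (x + k + a) - Real.log (x + k + b))
      = (a - b) * Real.log n - D n := by
    intro n hn
    have c1 : ∑ j ∈ Finset.range (n + 1), Real.log (x + j + a)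
        = ∑ j ∈ Finset.range (n + 1), Real.log ((x + a) + j) :=
      Finset.sum_congr rfl fun j _ => by ring_nf
    have c2 : ∑ j ∈ Finset.range (n + 1), Real.log (x + j + b)
        = ∑ j ∈ Finset.range (n + 1), Real.log ((x + b) + j) :=
      Finset.sum_congr rfl fun j _ => by ring_nf
    have hDn : D n = (a - b) * Real.log n
        - (∑ j ∈ Finset.range (n + 1), Real.log ((x + a) + j)
          - ∑ j ∈ Finset.range (n + 1), Real.log ((x + b) + j)) := by
      simp only [hDdef]
      rw [log_gammaSeq (by linarith) hn, log_gammaSeq (by positivity) hn]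
      ring
    rw [Finset.sum_sub_distrib, c1, c2, hDn]
    ring
  have hP : ∀ n : ℕ, 1 ≤ n → ∑ k ∈ Finset.range (n + 1), Tfun a b (x + k)
      = (a - b) * (Real.log (x + n + 1) - Real.log n) - (a - b) * Real.log x + D n := by
    intro n hn
    have e1 : ∑ k ∈ Finset.range (n + 1), Tfun a b (x + k)
        = (a - b) * (∑ k ∈ Finset.range (n + 1), (Real.log (x + k + 1) - Real.log (x + k)))
          - ∑ k ∈ Finset.range (n + 1), (Real.log (x + k + a) - Real.log (x + k + b)) := by
      rw [Finset.mul_sum, ← Finset.sum_sub_distrib]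
      apply Finset.sum_congr rfl
      intro k _
      unfold Tfun
      ring
    rw [e1, tele (n + 1), hGS n hn]
    push_cast
    ring
  have hGa : (0:ℝ) < Real.Gamma (x + a) := Real.Gamma_pos_of_pos (by linarith)
  have hGb : (0:ℝ) < Real.Gamma (x + b) := Real.Gamma_pos_of_pos (by linarith)
  have hDlim : Tendsto D atTop
      (𝓝 (Real.log (Real.Gamma (x + a)) - Real.log (Real.Gamma (x + b)))) :=
    ((Real.GammaSeq_tendsto_Gamma (x + a)).log hGa.ne').sub
      ((Real.GammaSeq_tendsto_Gamma (x + b)).log hGb.ne')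
  have hq : Tendsto (fun n : ℕ => Real.log (x + n + 1) - Real.log n) atTop (𝓝 0) := by
    have h0 : Tendsto (fun n : ℕ => (x + 1) / n + 1) atTop (𝓝 1) := by
      simpa using (tendsto_const_div_atTop_nhds_zero_nat (x + 1)).add_const 1
    have h1 : Tendsto (fun n : ℕ => Real.log ((x + 1) / n + 1)) atTop (𝓝 0) := by
      simpa using h0.log one_ne_zero
    apply h1.congr'
    filter_upwards [eventually_ge_atTop 1] with n hn
    have hn0 : (0:ℝ) < n := by exact_mod_cast hn
    have harg : (x + 1) / n + 1 = (x + n + 1) / n := by field_simp; ring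
    rw [harg, Real.log_div (by positivity) hn0.ne']
  have hE : Tendsto (fun n : ℕ => (a - b) * (Real.log (x + n + 1) - Real.log n)
        - (a - b) * Real.log x + D n) atTop
      (𝓝 (Real.log (Real.Gamma (x + a)) - Real.log (Real.Gamma (x + b))
        - (a - b) * Real.log x)) := by
    have h2 := ((hq.const_mul (a - b)).sub_const ((a - b) * Real.log x)).add hDlim
    convert h2 using 1
    ring
  have hfinal : Tendsto (fun n : ℕ => ∑ k ∈ Finset.range (n + 1), Tfun a b (x + k)) atTop
      (𝓝 (Real.log (Real.Gamma (x + a)) - Real.log (Real.Gamma (x + b))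
        - (a - b) * Real.log x)) := by
    apply hE.congr'
    filter_upwards [eventually_ge_atTop 1] with n hn
    exact (hP n hn).symm
  exact (tendsto_add_atTop_iff_nat 1).mp hfinal

theorem neg_log_M_isGenStieltjes_two (a b : ℝ) (hb : 0 < b) (hba : b < a) (ha : 1 < a) :
    IsGenStieltjes 2 (fun x => -Real.log (M a b x)) := by
  have h0a : (0:ℝ) < a := by linarith
  set ν := volume.restrict (Set.Ioi (0:ℝ)) with hν
  set W : ℝ → ENNReal := fun t => ∑' k : ℕ, ENNReal.ofReal (rho a b (t - k)) with hWdef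
  have hWm : Measurable W := by
    apply Measurable.ennreal_tsum
    intro k
    exact ((rho_continuous a b).measurable.comp (measurable_id.sub measurable_const)).ennreal_ofReal
  refine ⟨ν.withDensity W, 0, ?_, le_rfl, ?_⟩
  · rw [withDensity_apply _ measurableSet_Iio, hν, Measure.restrict_restrict measurableSet_Iio]
    simp [Set.Iio_inter_Ioi]
  intro x hx
  have hg : Measurable fun t : ℝ => (x + t) ^ (-(2:ℝ)) := by fun_prop
  set f : ℕ → ℝ → ℝ := fun k t => rho a b (t - k) * (x + t) ^ (-(2:ℝ)) with hfdef
  have hsupp : ∀ k : ℕ, ∀ t : ℝ, t ∉ Set.Ioc (k:ℝ) (k + a) → f k t = 0 := by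
    intro k t ht
    rw [Set.mem_Ioc, not_and_or] at ht
    have hz : rho a b (t - k) = 0 := by
      rcases ht with h | h
      · push_neg at h
        exact rho_eq_zero_of_nonpos hb hba ha (by linarith)
      · push_neg at h
        exact rho_eq_zero_of_ge hb hba ha (by linarith)
    simp [hfdef, hz]
  have hcont : ∀ k : ℕ, ContinuousOn (f k) (Set.Icc (k:ℝ) (k + a)) := by
    intro k
    apply ContinuousOn.mul
    · exact ((rho_continuous a b).comp (continuous_id.sub continuous_const)).continuousOn
    · apply ContinuousOn.rpow_const (continuous_const.add continuous_id).continuousOn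
      intro t ht
      left
      have h1 : (0:ℝ) ≤ k := Nat.cast_nonneg k
      have h2 := ht.1
      have h3 : (0:ℝ) < x + t := by linarith
      exact h3.ne'
  have hIntk : ∀ k : ℕ, Integrable (f k) volume := by
    intro k
    have hss : Function.support (f k) ⊆ Set.Icc (k:ℝ) (k + a) := by
      intro t ht
      by_contra hc
      exact ht (hsupp k t fun hmem => hc (Set.Ioc_subset_Icc_self hmem))
    rw [← integrableOn_iff_integrable_of_support_subset hss]
    exact (hcont k).integrableOn_Icc
  have hnonneg : ∀ k : ℕ, ∀ t : ℝ, t ∈ Set.Ioi (0:ℝ) → 0 ≤ f k t := by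
    intro k t ht
    exact mul_nonneg (rho_nonneg hb hba ha _)
      (Real.rpow_nonneg (by simp only [Set.mem_Ioi] at ht; linarith) _)
  have hBk : ∀ k : ℕ, ∫ t in Set.Ioi (0:ℝ), f k t = Tfun a b (x + k) := by
    intro k
    have hk0 : (0:ℝ) ≤ k := Nat.cast_nonneg k
    have e0 : ∫ t in Set.Ioi (0:ℝ), f k t = ∫ t, f k t := by
      apply setIntegral_eq_integral_of_forall_compl_eq_zero
      intro t ht
      simp only [Set.mem_Ioi, not_lt] at ht
      exact hsupp k t fun hmem => absurd hmem.1 (not_lt.2 (ht.trans hk0))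
    have e1 : ∫ t, f k t = ∫ t in Set.Ioc (k:ℝ) (k + a), f k t :=
      (setIntegral_eq_integral_of_forall_compl_eq_zero (hsupp k)).symm
    rw [e0, e1, ← intervalIntegral.integral_of_le (by linarith : (k:ℝ) ≤ k + a)]
    have e2 := intervalIntegral.integral_comp_add_right (a := (0:ℝ)) (b := a) (f k) (k:ℝ)
    rw [zero_add, add_comm a (k:ℝ)] at e2
    rw [← e2]
    have e3 : ∫ u in (0:ℝ)..a, f k (u + k)
        = ∫ u in (0:ℝ)..a, rho a b u / ((x + k) + u) ^ 2 := by
      apply intervalIntegral.integral_congr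
      intro u hu
      rw [uIcc_of_le h0a.le] at hu
      have hp : (0:ℝ) < x + (u + k) := by
        have := hu.1
        positivity
      simp only [hfdef]
      rw [add_sub_cancel_right]
      rw [Real.rpow_neg hp.le, show (2:ℝ) = ((2:ℕ):ℝ) by norm_num, Real.rpow_natCast]
      rw [show x + (u + (k:ℝ)) = (x + k) + u by ring, div_eq_mul_inv]
    rw [e3]
    exact T_integral hb hba ha (by positivity)
  have hTnn : ∀ k : ℕ, 0 ≤ Tfun a b (x + k) := fun k => Tfun_nonneg hb hba ha (by positivity)
  have hHS := hasSum_Tfun hb hba ha hx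
  set F : ℝ := Real.log (Real.Gamma (x + a)) - Real.log (Real.Gamma (x + b))
      - (a - b) * Real.log x with hFdef
  have hFnn : 0 ≤ F := by rw [← hHS.tsum_eq]; exact tsum_nonneg hTnn
  have hLk : ∀ k : ℕ, ∫⁻ t in Set.Ioi (0:ℝ),
        ENNReal.ofReal (rho a b (t - k)) * ENNReal.ofReal ((x + t) ^ (-(2:ℝ)))
      = ENNReal.ofReal (Tfun a b (x + k)) := by
    intro k
    rw [← hBk k, ofReal_integral_eq_lintegral_ofReal ((hIntk k).integrableOn)
      (ae_restrict_of_forall_mem measurableSet_Ioi (hnonneg k))]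
    exact lintegral_congr fun t => (ENNReal.ofReal_mul (rho_nonneg hb hba ha _)).symm
  have hmain : ∫⁻ t, ENNReal.ofReal ((x + t) ^ (-(2:ℝ))) ∂(ν.withDensity W)
      = ENNReal.ofReal F := by
    rw [lintegral_withDensity_eq_lintegral_mul _ hWm hg.ennreal_ofReal]
    calc ∫⁻ t, (W * fun t => ENNReal.ofReal ((x + t) ^ (-(2:ℝ)))) t ∂ν
        = ∫⁻ t, ∑' k : ℕ, ENNReal.ofReal (rho a b (t - k))
            * ENNReal.ofReal ((x + t) ^ (-(2:ℝ))) ∂ν := by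
          apply lintegral_congr
          intro t
          simp only [Pi.mul_apply, hWdef]
          rw [ENNReal.tsum_mul_right]
      _ = ∑' k : ℕ, ∫⁻ t, ENNReal.ofReal (rho a b (t - k))
            * ENNReal.ofReal ((x + t) ^ (-(2:ℝ))) ∂ν := by
          apply lintegral_tsum
          intro k
          exact (((rho_continuous a b).measurable.comp
            (measurable_id.sub measurable_const)).ennreal_ofReal.mul
            hg.ennreal_ofReal).aemeasurable
      _ = ∑' k : ℕ, ENNReal.ofReal (Tfun a b (x + k)) := tsum_congr fun k => hLk k
      _ = ENNReal.ofReal F := by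
          rw [← ENNReal.ofReal_tsum_of_nonneg hTnn hHS.summable, hHS.tsum_eq]
  have hgnn : ∀ᵐ t ∂(ν.withDensity W), 0 ≤ (x + t) ^ (-(2:ℝ)) := by
    apply Filter.Eventually.filter_mono (withDensity_absolutelyContinuous ν W).ae_le
    filter_upwards [ae_restrict_mem measurableSet_Ioi] with t ht
    exact Real.rpow_nonneg (by simp only [Set.mem_Ioi] at ht; linarith) _
  constructor
  · refine ⟨hg.aestronglyMeasurable, ?_⟩
    rw [hasFiniteIntegral_iff_ofReal hgnn, hmain]
    exact ENNReal.ofReal_lt_top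
  · rw [integral_eq_lintegral_of_nonneg_ae hgnn hg.aestronglyMeasurable, hmain,
      ENNReal.toReal_ofReal hFnn, add_zero]
    have hGa : (0:ℝ) < Real.Gamma (x + a) := Real.Gamma_pos_of_pos (by linarith)
    have hGb : (0:ℝ) < Real.Gamma (x + b) := Real.Gamma_pos_of_pos (by linarith)
    have hrp : (0:ℝ) < x ^ (a - b) := Real.rpow_pos_of_pos hx _
    show -Real.log (M a b x) = F
    rw [hFdef, M, Real.log_div (mul_ne_zero hrp.ne' hGb.ne') hGa.ne',
      Real.log_mul hrp.ne' hGb.ne', Real.log_rpow hx]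
    ring
end

section
/- Let 0 < b < a with a - b > 1, and define w(t) = ((1-e^{-t})/t)^{a-b-1} e^{-bt} for t > 0. Then w is decreasing on (0,∞) and log w is convex on (0,∞). -/
open Real Set

/-- `w(t) = ((1-e^{-t})/t)^{a-b-1} e^{-bt}`. -/
noncomputable def w (a b : ℝ) (t : ℝ) : ℝ :=
  ((1 - Real.exp (-t)) / t) ^ (a - b - 1) * Real.exp (-b * t)

/-- Key inequality: `t e^{-t/2} ≤ 1 - e^{-t}` for `t ≥ 0`. -/
lemma key_ineq {t : ℝ} (ht : 0 ≤ t) : t * Real.exp (-t / 2) ≤ 1 - Real.exp (-t) := by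
  set g : ℝ → ℝ := fun x => 1 - Real.exp (-x) - x * Real.exp (-x / 2) with hgdef
  have hderiv : ∀ x : ℝ, HasDerivAt g
      (Real.exp (-x) - Real.exp (-x / 2) + x / 2 * Real.exp (-x / 2)) x := by
    intro x
    have h1 : HasDerivAt (fun x : ℝ => Real.exp (-x)) (Real.exp (-x) * (-1)) x :=
      (hasDerivAt_neg x).exp
    have h2 : HasDerivAt (fun x : ℝ => Real.exp (-x / 2)) (Real.exp (-x / 2) * (-1 / 2)) x := by
      have hl : HasDerivAt (fun x : ℝ => -x / 2) (-1 / 2 : ℝ) x := by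
        simpa using (hasDerivAt_neg x).div_const 2
      exact hl.exp
    have h3 : HasDerivAt (fun x : ℝ => x * Real.exp (-x / 2))
        (1 * Real.exp (-x / 2) + x * (Real.exp (-x / 2) * (-1 / 2))) x :=
      (hasDerivAt_id x).mul h2
    have h4 : HasDerivAt g (0 - Real.exp (-x) * (-1) -
        (1 * Real.exp (-x / 2) + x * (Real.exp (-x / 2) * (-1 / 2)))) x :=
      ((hasDerivAt_const x (1 : ℝ)).sub h1).sub h3
    convert h4 using 1
    ring
  have hmono : Monotone g := by
    apply monotone_of_deriv_nonneg
    · exact fun x => (hderiv x).differentiableAt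
    · intro x
      rw [(hderiv x).deriv]
      have hexp : Real.exp (-x) = Real.exp (-x / 2) * Real.exp (-x / 2) := by
        rw [← Real.exp_add]; ring_nf
      have h5 : 1 + (-x / 2) ≤ Real.exp (-x / 2) := by
        have := Real.add_one_le_exp (-x / 2); linarith
      have hpos := Real.exp_pos (-x / 2)
      nlinarith [Real.exp_pos (-x / 2)]
  have h0 : g 0 = 0 := by simp [hgdef]
  have := hmono ht
  rw [h0] at this
  simp only [hgdef] at this
  linarith

theorem w_strictAntiOn_and_log_convexOn (a b : ℝ) (hb : 0 < b) (hba : b < a)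
    (hab : 1 < a - b) :
    StrictAntiOn (w a b) (Set.Ioi 0) ∧
    ConvexOn ℝ (Set.Ioi 0) (fun t => Real.log (w a b t)) := by
  set c := a - b - 1 with hc_def
  have hc : 0 < c := by simp only [hc_def]; linarith
  set f : ℝ → ℝ := fun t => c * (Real.log (1 - Real.exp (-t)) - Real.log t) - b * t with hfdef
  set f1 : ℝ → ℝ := fun t => c * (Real.exp (-t) / (1 - Real.exp (-t)) - t⁻¹) - b with hf1def
  set f2 : ℝ → ℝ := fun t =>
    c * ((t ^ 2)⁻¹ - Real.exp (-t) / (1 - Real.exp (-t)) ^ 2) with hf2def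
  -- positivity of 1 - e^{-t}
  have hpos : ∀ t : ℝ, 0 < t → 0 < 1 - Real.exp (-t) := by
    intro t ht
    have : Real.exp (-t) < Real.exp 0 := Real.exp_lt_exp.2 (by linarith)
    simpa using this
  -- f has derivative f1 on Ioi 0
  have hDexp : ∀ t : ℝ, HasDerivAt (fun t : ℝ => Real.exp (-t)) (Real.exp (-t) * (-1)) t :=
    fun t => (hasDerivAt_neg t).exp
  have hD1 : ∀ t : ℝ, HasDerivAt (fun t : ℝ => 1 - Real.exp (-t)) (Real.exp (-t)) t := by
    intro t
    have : HasDerivAt (fun t : ℝ => 1 - Real.exp (-t)) (0 - Real.exp (-t) * (-1)) t :=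
      (hasDerivAt_const t (1 : ℝ)).sub (hDexp t)
    convert this using 1; ring
  have hf : ∀ t ∈ Ioi (0 : ℝ), HasDerivAt f (f1 t) t := by
    intro t ht
    have ht' : (0 : ℝ) < t := ht
    have hne : 1 - Real.exp (-t) ≠ 0 := (hpos t ht').ne'
    have hlog1 : HasDerivAt (fun t : ℝ => Real.log (1 - Real.exp (-t)))
        (Real.exp (-t) / (1 - Real.exp (-t))) t := (hD1 t).log hne
    have hlog2 : HasDerivAt Real.log t⁻¹ t := Real.hasDerivAt_log ht'.ne'
    have hbt : HasDerivAt (fun t : ℝ => b * t) b t := by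
      simpa using (hasDerivAt_id t).const_mul b
    have : HasDerivAt f (c * (Real.exp (-t) / (1 - Real.exp (-t)) - t⁻¹) - b) t :=
      ((hlog1.sub hlog2).const_mul c).sub hbt
    convert this using 1
  -- f1 has derivative f2 on Ioi 0
  have hf1 : ∀ t ∈ Ioi (0 : ℝ), HasDerivAt f1 (f2 t) t := by
    intro t ht
    have ht' : (0 : ℝ) < t := ht
    have hne : 1 - Real.exp (-t) ≠ 0 := (hpos t ht').ne'
    have hquot : HasDerivAt (fun t : ℝ => Real.exp (-t) / (1 - Real.exp (-t)))
        ((Real.exp (-t) * (-1) * (1 - Real.exp (-t)) - Real.exp (-t) * Real.exp (-t)) /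
          (1 - Real.exp (-t)) ^ 2) t := (hDexp t).div (hD1 t) hne
    have hinv : HasDerivAt (fun t : ℝ => t⁻¹) (-(t ^ 2)⁻¹) t := by
      simpa using hasDerivAt_inv ht'.ne'
    have : HasDerivAt f1 (c * ((Real.exp (-t) * (-1) * (1 - Real.exp (-t)) -
        Real.exp (-t) * Real.exp (-t)) / (1 - Real.exp (-t)) ^ 2 - -(t ^ 2)⁻¹) - 0) t :=
      ((hquot.sub hinv).const_mul c).sub (hasDerivAt_const t b)
    have hnum : Real.exp (-t) * (-1) * (1 - Real.exp (-t)) - Real.exp (-t) * Real.exp (-t)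
        = -Real.exp (-t) := by ring
    rw [hnum] at this
    convert this using 1
    simp only [hf2def]
    rw [neg_div]
    ring
  -- f1 < 0 on Ioi 0
  have hf1neg : ∀ t ∈ Ioi (0 : ℝ), f1 t < 0 := by
    intro t ht
    have ht' : (0 : ℝ) < t := ht
    have h1 := hpos t ht'
    have hlt : t + 1 < Real.exp t := Real.add_one_lt_exp ht'.ne'
    have hmul : (t + 1) * Real.exp (-t) < Real.exp t * Real.exp (-t) :=
      mul_lt_mul_of_pos_right hlt (Real.exp_pos _)
    rw [← Real.exp_add] at hmul
    simp only [add_neg_cancel, Real.exp_zero] at hmul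
    have hdiv : Real.exp (-t) / (1 - Real.exp (-t)) < t⁻¹ := by
      rw [div_lt_iff₀ h1, inv_mul_eq_div, lt_div_iff₀ ht']
      nlinarith
    have : c * (Real.exp (-t) / (1 - Real.exp (-t)) - t⁻¹) < 0 :=
      mul_neg_of_pos_of_neg hc (by linarith)
    simp only [hf1def]
    linarith
  -- f2 ≥ 0 on Ioi 0
  have hf2nonneg : ∀ t ∈ Ioi (0 : ℝ), 0 ≤ f2 t := by
    intro t ht
    have ht' : (0 : ℝ) < t := ht
    have h1 := hpos t ht'
    have hkey := key_ineq ht'.le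
    have hL : 0 ≤ t * Real.exp (-t / 2) :=
      mul_nonneg ht'.le (Real.exp_pos _).le
    have hsq : (t * Real.exp (-t / 2)) ^ 2 ≤ (1 - Real.exp (-t)) ^ 2 := by
      exact pow_le_pow_left₀ hL hkey 2
    have hexp : Real.exp (-t / 2) * Real.exp (-t / 2) = Real.exp (-t) := by
      rw [← Real.exp_add]; ring_nf
    have hsq' : t ^ 2 * Real.exp (-t) ≤ (1 - Real.exp (-t)) ^ 2 := by
      calc t ^ 2 * Real.exp (-t) = (t * Real.exp (-t / 2)) ^ 2 := by
            rw [mul_pow, ← hexp]; ring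
        _ ≤ (1 - Real.exp (-t)) ^ 2 := hsq
    have hdiv : Real.exp (-t) / (1 - Real.exp (-t)) ^ 2 ≤ (t ^ 2)⁻¹ := by
      rw [div_le_iff₀ (by positivity), inv_mul_eq_div, le_div_iff₀ (by positivity)]
      nlinarith
    simp only [hf2def]
    exact mul_nonneg hc.le (by linarith)
  -- continuity / differentiability of f on Ioi 0
  have hcont : ContinuousOn f (Ioi 0) :=
    fun x hx => ((hf x hx).continuousAt).continuousWithinAt
  have hanti : StrictAntiOn f (Ioi 0) := by
    apply strictAntiOn_of_deriv_neg (convex_Ioi 0) hcont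
    intro x hx
    rw [interior_Ioi] at hx
    rw [(hf x hx).deriv]
    exact hf1neg x hx
  -- convexity of f
  have hEq' : ∀ x ∈ Ioi (0 : ℝ), deriv f x = f1 x := fun x hx => (hf x hx).deriv
  have hconv : ConvexOn ℝ (Ioi 0) f := by
    apply convexOn_of_deriv2_nonneg (convex_Ioi 0) hcont
    · rw [interior_Ioi]
      exact fun x hx => (hf x hx).differentiableAt.differentiableWithinAt
    · rw [interior_Ioi]
      intro x hx
      have hev : f1 =ᶠ[nhds x] deriv f :=
        Filter.eventuallyEq_of_mem (isOpen_Ioi.mem_nhds hx) (fun y hy => (hEq' y hy).symm)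
      exact ((hf1 x hx).differentiableAt.congr_of_eventuallyEq hev.symm).differentiableWithinAt
    · rw [interior_Ioi]
      intro x hx
      have hev : deriv f =ᶠ[nhds x] f1 :=
        Filter.eventuallyEq_of_mem (isOpen_Ioi.mem_nhds hx) hEq'
      have : deriv (deriv f) x = f2 x := by
        rw [hev.deriv_eq, (hf1 x hx).deriv]
      simp only [Function.iterate_succ, Function.iterate_zero, Function.comp_apply, id_eq]
      rw [show deriv (deriv f) x = f2 x from this]
      exact hf2nonneg x hx
  -- relation between w and f
  have hEqw : ∀ t ∈ Ioi (0 : ℝ), w a b t = Real.exp (f t) := by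
    intro t ht
    have ht' : (0 : ℝ) < t := ht
    have h1 := hpos t ht'
    have hB : 0 < (1 - Real.exp (-t)) / t := div_pos h1 ht'
    rw [w, Real.rpow_def_of_pos hB, ← Real.exp_add]
    congr 1
    rw [Real.log_div h1.ne' ht'.ne']
    simp only [hfdef, hc_def]
    ring
  have hEqlog : ∀ t ∈ Ioi (0 : ℝ), f t = Real.log (w a b t) := by
    intro t ht
    rw [hEqw t ht, Real.log_exp]
  constructor
  · intro x hx y hy hxy
    rw [hEqw x hx, hEqw y hy]
    exact Real.exp_lt_exp.2 (hanti hx hy hxy)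
  · exact hconv.congr hEqlog
end

section
/- Let λ₁, λ₂ > 0 and let f₁, f₂ : (0,∞) → (0,∞) be C^∞ functions with f₁ in the generalized Bernstein class B_{λ₁} and f₂ in B_{λ₂}. Then the product f₁f₂ belongs to B_{λ₁+λ₂}, i.e. x ↦ x^{1-λ₁-λ₂} (f₁f₂)'(x) is completely monotonic on (0,∞). -/
open Real Set

/-- `f` is completely monotonic on `(0,∞)`. -/
def CompletelyMonotonicOn (f : ℝ → ℝ) : Prop :=
  ContDiffOn ℝ (⊤ : ℕ∞) f (Set.Ioi 0) ∧
  ∀ (n : ℕ) (x : ℝ), 0 < x → 0 ≤ (-1 : ℝ) ^ n * iteratedDeriv n f x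

private lemma contDiffOn_iteratedDeriv' {f : ℝ → ℝ} (hf : ContDiffOn ℝ (⊤ : ℕ∞) f (Set.Ioi 0)) (n : ℕ) :
    ContDiffOn ℝ (⊤ : ℕ∞) (iteratedDeriv n f) (Set.Ioi 0) := by
  induction n with
  | zero => simpa using hf
  | succ n ih =>
      rw [iteratedDeriv_succ]
      exact ih.deriv_of_isOpen isOpen_Ioi (by simp)

private lemma hasDerivAt_iteratedDeriv' {f : ℝ → ℝ} (hf : ContDiffOn ℝ (⊤ : ℕ∞) f (Set.Ioi 0)) (n : ℕ)
    {x : ℝ} (hx : 0 < x) :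
    HasDerivAt (iteratedDeriv n f) (iteratedDeriv (n + 1) f x) x := by
  have h := (((contDiffOn_iteratedDeriv' hf n).differentiableOn (by simp)).differentiableAt
      (isOpen_Ioi.mem_nhds hx))
  simpa [iteratedDeriv_succ] using h.hasDerivAt

private lemma itD_within_Ioi (f : ℝ → ℝ) (n : ℕ) {x : ℝ} (hx : 0 < x) :
    iteratedDerivWithin n f (Set.Ioi 0) x = iteratedDeriv n f x := by
  rw [iteratedDerivWithin_eq_iteratedFDerivWithin, iteratedDeriv_eq_iteratedFDeriv,
    iteratedFDerivWithin_of_isOpen n isOpen_Ioi hx]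

private lemma itD_add' {p q : ℝ → ℝ} (hp : ContDiffOn ℝ (⊤ : ℕ∞) p (Set.Ioi 0))
    (hq : ContDiffOn ℝ (⊤ : ℕ∞) q (Set.Ioi 0)) (n : ℕ) {x : ℝ} (hx : 0 < x) :
    iteratedDeriv n (fun y => p y + q y) x = iteratedDeriv n p x + iteratedDeriv n q x := by
  have h := iteratedDerivWithin_add (n := n) (mem_Ioi.mpr hx) (uniqueDiffOn_Ioi 0)
    ((hp.contDiffWithinAt (mem_Ioi.mpr hx)).of_le (by exact_mod_cast le_top))
    ((hq.contDiffWithinAt (mem_Ioi.mpr hx)).of_le (by exact_mod_cast le_top))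
  rw [itD_within_Ioi _ _ hx, itD_within_Ioi _ _ hx, itD_within_Ioi _ _ hx] at h
  exact h

private lemma CM_sign_mul (n : ℕ) :
    ∀ (f g : ℝ → ℝ), ContDiffOn ℝ (⊤ : ℕ∞) f (Set.Ioi 0) → ContDiffOn ℝ (⊤ : ℕ∞) g (Set.Ioi 0) →
    (∀ (k : ℕ) (x : ℝ), 0 < x → 0 ≤ (-1 : ℝ) ^ k * iteratedDeriv k f x) →
    (∀ (k : ℕ) (x : ℝ), 0 < x → 0 ≤ (-1 : ℝ) ^ k * iteratedDeriv k g x) →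
    ∀ (x : ℝ), 0 < x → 0 ≤ (-1 : ℝ) ^ n * iteratedDeriv n (fun y => f y * g y) x := by
  induction n with
  | zero =>
      intro f g hf hg hsf hsg x hx
      have h0f := hsf 0 x hx
      have h0g := hsg 0 x hx
      simp only [pow_zero, one_mul, iteratedDeriv_zero] at *
      exact mul_nonneg h0f h0g
  | succ n IH =>
      intro f g hf hg hsf hsg x hx
      have hf' : ContDiffOn ℝ (⊤ : ℕ∞) (fun y => -deriv f y) (Set.Ioi 0) :=
        (hf.deriv_of_isOpen isOpen_Ioi (by simp)).neg
      have hg' : ContDiffOn ℝ (⊤ : ℕ∞) (fun y => -deriv g y) (Set.Ioi 0) :=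
        (hg.deriv_of_isOpen isOpen_Ioi (by simp)).neg
      have hsf' : ∀ (k : ℕ) (y : ℝ), 0 < y → 0 ≤ (-1 : ℝ) ^ k *
          iteratedDeriv k (fun y => -deriv f y) y := by
        intro k y hy
        have := hsf (k + 1) y hy
        rw [iteratedDeriv_succ'] at this
        rw [iteratedDeriv_fun_neg]
        rw [pow_succ] at this
        nlinarith [this]
      have hsg' : ∀ (k : ℕ) (y : ℝ), 0 < y → 0 ≤ (-1 : ℝ) ^ k *
          iteratedDeriv k (fun y => -deriv g y) y := by
        intro k y hy
        have := hsg (k + 1) y hy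
        rw [iteratedDeriv_succ'] at this
        rw [iteratedDeriv_fun_neg]
        rw [pow_succ] at this
        nlinarith [this]
      -- the derivative of the product agrees with f' g + f g' on Ioi 0
      have e2 : Set.EqOn (deriv (fun y => f y * g y))
          (fun y => deriv f y * g y + f y * deriv g y) (Set.Ioi 0) := by
        intro y hy
        have dfy : HasDerivAt f (deriv f y) y :=
          (((hf.differentiableOn (by simp)).differentiableAt
            (isOpen_Ioi.mem_nhds hy))).hasDerivAt
        have dgy : HasDerivAt g (deriv g y) y :=
          (((hg.differentiableOn (by simp)).differentiableAt
            (isOpen_Ioi.mem_nhds hy))).hasDerivAt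
        exact (dfy.mul dgy).deriv
      have e1 : iteratedDeriv (n + 1) (fun y => f y * g y) x
          = iteratedDeriv n (fun y => deriv f y * g y) x
            + iteratedDeriv n (fun y => f y * deriv g y) x := by
        rw [iteratedDeriv_succ', e2.iteratedDeriv_of_isOpen isOpen_Ioi n hx]
        exact itD_add' ((hf.deriv_of_isOpen isOpen_Ioi (by simp)).mul hg)
          (hf.mul (hg.deriv_of_isOpen isOpen_Ioi (by simp))) n hx
      have e3 : iteratedDeriv n (fun y => deriv f y * g y) x
          = -iteratedDeriv n (fun y => (-deriv f y) * g y) x := by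
        have : (fun y => deriv f y * g y) = fun y => -((-deriv f y) * g y) := by
          funext y; ring
        rw [this, iteratedDeriv_fun_neg]
      have e4 : iteratedDeriv n (fun y => f y * deriv g y) x
          = -iteratedDeriv n (fun y => f y * (-deriv g y)) x := by
        have : (fun y => f y * deriv g y) = fun y => -(f y * (-deriv g y)) := by
          funext y; ring
        rw [this, iteratedDeriv_fun_neg]
      have A := IH (fun y => -deriv f y) g hf' hg hsf' hsg x hx
      have B := IH f (fun y => -deriv g y) hf hg' hsf hsg' x hx
      rw [e1, e3, e4, pow_succ]
      nlinarith [A, B]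

private lemma CM_mul {f g : ℝ → ℝ} (hf : CompletelyMonotonicOn f) (hg : CompletelyMonotonicOn g) :
    CompletelyMonotonicOn (fun x => f x * g x) := by
  refine ⟨hf.1.mul hg.1, fun n x hx => CM_sign_mul n f g hf.1 hg.1 hf.2 hg.2 x hx⟩

private lemma contDiffOn_rpow_Ioi (c : ℝ) : ContDiffOn ℝ (⊤ : ℕ∞) (fun x : ℝ => x ^ c) (Set.Ioi 0) :=
  fun x hx => (Real.contDiffAt_rpow_const_of_ne (ne_of_gt (mem_Ioi.mp hx))).contDiffWithinAt

private lemma small_x_mul_deriv {f : ℝ → ℝ} (hfs : ContDiffOn ℝ (⊤ : ℕ∞) f (Set.Ioi 0))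
    (hfpos : ∀ x : ℝ, 0 < x → 0 < f x) {ε δ : ℝ} (hε : 0 < ε) (hδ : 0 < δ) :
    ∃ y : ℝ, 0 < y ∧ y < δ ∧ y * deriv f y < ε := by
  by_contra hcon
  push_neg at hcon
  have hd : ∀ y ∈ Set.Ioo (0:ℝ) δ, HasDerivAt (fun y => f y - ε * Real.log y)
      (deriv f y - ε / y) y := by
    intro y hy
    have h1 : HasDerivAt f (deriv f y) y :=
      (((hfs.differentiableOn (by simp)).differentiableAt
        (isOpen_Ioi.mem_nhds hy.1))).hasDerivAt
    have h2 : HasDerivAt Real.log y⁻¹ y := Real.hasDerivAt_log (ne_of_gt hy.1)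
    have := h1.sub (h2.const_mul ε)
    rw [div_eq_mul_inv]; exact this
  have hmono : MonotoneOn (fun y => f y - ε * Real.log y) (Set.Ioo 0 δ) := by
    refine monotoneOn_of_deriv_nonneg (convex_Ioo 0 δ) ?_ ?_ ?_
    · exact fun y hy => ((hd y hy).continuousAt).continuousWithinAt
    · intro y hy
      rw [interior_Ioo] at hy
      exact ((hd y hy).differentiableAt).differentiableWithinAt
    · intro y hy
      rw [interior_Ioo] at hy
      rw [(hd y hy).deriv]
      have h3 := hcon y hy.1 hy.2
      have : ε / y ≤ deriv f y := (div_le_iff₀ hy.1).mpr (by linarith [h3])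
      linarith
  set z : ℝ := δ / 2 with hz
  have hzpos : 0 < z := by positivity
  have hzmem : z ∈ Set.Ioo (0:ℝ) δ := ⟨hzpos, by simp [hz]; linarith⟩
  set y₀ : ℝ := min (δ / 4) (z * Real.exp (-(f z + 1) / ε)) with hy₀
  have hy₀pos : 0 < y₀ := lt_min (by positivity) (by positivity)
  have hy₀lt : y₀ ≤ δ / 4 := min_le_left _ _
  have hy₀mem : y₀ ∈ Set.Ioo (0:ℝ) δ := ⟨hy₀pos, by linarith⟩
  have hy₀z : y₀ ≤ z := by rw [hz]; linarith
  have hlog : Real.log y₀ ≤ Real.log z + (-(f z + 1) / ε) := by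
    have h4 : Real.log y₀ ≤ Real.log (z * Real.exp (-(f z + 1) / ε)) :=
      Real.log_le_log hy₀pos (min_le_right _ _)
    rwa [Real.log_mul (ne_of_gt hzpos) (Real.exp_ne_zero _), Real.log_exp] at h4
  have h5 := hmono hy₀mem hzmem hy₀z
  simp only at h5
  have h6 : ε * Real.log y₀ ≤ ε * Real.log z - (f z + 1) := by
    have := mul_le_mul_of_nonneg_left hlog (le_of_lt hε)
    have h7 : ε * (-(f z + 1) / ε) = -(f z + 1) := by field_simp
    nlinarith [this, h7]
  have h8 : 0 < f y₀ := hfpos _ hy₀pos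
  nlinarith [h5, h6, h8]

private lemma G_hasDerivAt {g : ℝ → ℝ} (hg : ContDiffOn ℝ (⊤ : ℕ∞) g (Set.Ioi 0)) (m : ℕ) {x : ℝ}
    (hx : 0 < x) :
    HasDerivAt (fun y => (-1:ℝ)^m * iteratedDeriv m g y)
      ((-1:ℝ)^m * iteratedDeriv (m+1) g x) x :=
  (hasDerivAt_iteratedDeriv' hg m hx).const_mul _

private lemma G_anti {g : ℝ → ℝ} (hg : CompletelyMonotonicOn g) (m : ℕ) :
    AntitoneOn (fun y => (-1:ℝ)^m * iteratedDeriv m g y) (Set.Ioi 0) := by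
  refine antitoneOn_of_deriv_nonpos (convex_Ioi 0) ?_ ?_ ?_
  · exact fun y hy => ((G_hasDerivAt hg.1 m hy).continuousAt).continuousWithinAt
  · intro y hy
    rw [interior_Ioi] at hy
    exact ((G_hasDerivAt hg.1 m hy).differentiableAt).differentiableWithinAt
  · intro y hy
    rw [interior_Ioi] at hy
    rw [(G_hasDerivAt hg.1 m hy).deriv]
    have h1 := hg.2 (m+1) y hy
    rw [pow_succ] at h1
    nlinarith [h1]

private lemma G_step {g : ℝ → ℝ} (hg : CompletelyMonotonicOn g) (k : ℕ) {x : ℝ} (hx : 0 < x) :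
    (-1:ℝ)^(k+1) * iteratedDeriv (k+1) g x
      ≤ 2 * ((-1:ℝ)^k * iteratedDeriv k g (x/2)) / x := by
  have hx2 : (0:ℝ) < x / 2 := by linarith
  have hlt : x / 2 < x := by linarith
  have hmem : ∀ y ∈ Set.Icc (x/2) x, y ∈ Set.Ioi (0:ℝ) := fun y hy => lt_of_lt_of_le hx2 hy.1
  obtain ⟨ξ, hξ, hslope⟩ := exists_hasDerivAt_eq_slope
    (fun y => (-1:ℝ)^k * iteratedDeriv k g y)
    (fun y => (-1:ℝ)^k * iteratedDeriv (k+1) g y) hlt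
    (fun y hy => ((G_hasDerivAt hg.1 k (hmem y hy)).continuousAt).continuousWithinAt)
    (fun y hy => G_hasDerivAt hg.1 k (hmem y (Set.mem_Icc_of_Ioo hy)))
  have hξ0 : (0:ℝ) < ξ := lt_trans hx2 hξ.1
  -- sign facts
  have hFx : 0 ≤ (-1:ℝ)^k * iteratedDeriv k g x := hg.2 k x hx
  have hFx2 : 0 ≤ (-1:ℝ)^k * iteratedDeriv k g (x/2) := hg.2 k (x/2) hx2
  -- antitonicity of G (k+1)
  have hanti := G_anti hg (k+1) (Set.mem_Ioi.mpr hξ0) (Set.mem_Ioi.mpr hx) (le_of_lt hξ.2)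
  simp only at hanti
  -- the slope identity rearranged
  have hxne : x - x / 2 = x / 2 := by ring
  rw [hxne] at hslope
  have hkey : (-1:ℝ)^(k+1) * iteratedDeriv (k+1) g ξ
      = ((-1:ℝ)^k * iteratedDeriv k g (x/2) - (-1:ℝ)^k * iteratedDeriv k g x) / (x/2) := by
    rw [pow_succ]
    field_simp at hslope ⊢
    nlinarith [hslope]
  have h2 : (-1:ℝ)^(k+1) * iteratedDeriv (k+1) g ξ
      ≤ 2 * ((-1:ℝ)^k * iteratedDeriv k g (x/2)) / x := by
    rw [hkey]
    rw [div_le_div_iff₀ (by linarith) hx]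
    nlinarith [hFx, hx]
  exact le_trans hanti h2

private lemma G_chain {g : ℝ → ℝ} (hg : CompletelyMonotonicOn g) (n : ℕ) :
    ∃ C : ℝ, 0 < C ∧ ∀ x : ℝ, 0 < x →
      x ^ n * ((-1:ℝ)^n * iteratedDeriv n g x) ≤ C * g (x / 2 ^ n) := by
  induction n with
  | zero => exact ⟨1, one_pos, fun x hx => by simp [iteratedDeriv_zero]⟩
  | succ n IH =>
      obtain ⟨C, hC, hb⟩ := IH
      refine ⟨2^(n+1) * C, by positivity, fun x hx => ?_⟩
      have hx2 : (0:ℝ) < x / 2 := by linarith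
      have h1 := G_step hg n hx
      have h2 := hb (x/2) hx2
      have hxp : (0:ℝ) ≤ x ^ (n+1) := by positivity
      have h3 : x ^ (n+1) * ((-1:ℝ)^(n+1) * iteratedDeriv (n+1) g x)
          ≤ x ^ (n+1) * (2 * ((-1:ℝ)^n * iteratedDeriv n g (x/2)) / x) :=
        mul_le_mul_of_nonneg_left h1 hxp
      have h4 : x ^ (n+1) * (2 * ((-1:ℝ)^n * iteratedDeriv n g (x/2)) / x)
          = 2^(n+1) * ((x/2) ^ n * ((-1:ℝ)^n * iteratedDeriv n g (x/2))) := by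
        rw [div_pow]
        field_simp
        ring
      have h5 : 2^(n+1) * ((x/2) ^ n * ((-1:ℝ)^n * iteratedDeriv n g (x/2)))
          ≤ 2^(n+1) * (C * g ((x/2) / 2 ^ n)) := by
        have : (0:ℝ) < 2^(n+1) := by positivity
        nlinarith [h2]
      have h6 : (x/2) / 2 ^ n = x / 2 ^ (n+1) := by
        rw [pow_succ]
        ring
      rw [h6] at h5
      calc x ^ (n+1) * ((-1:ℝ)^(n+1) * iteratedDeriv (n+1) g x)
          ≤ 2^(n+1) * ((x/2) ^ n * ((-1:ℝ)^n * iteratedDeriv n g (x/2))) := by rw [← h4]; exact h3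
        _ ≤ 2^(n+1) * (C * g (x / 2 ^ (n+1))) := h5
        _ = 2^(n+1) * C * g (x / 2 ^ (n+1)) := by ring

private lemma G_small {lam : ℝ} (hlam : 0 < lam) {f : ℝ → ℝ}
    (hfs : ContDiffOn ℝ (⊤ : ℕ∞) f (Set.Ioi 0)) (hfpos : ∀ x : ℝ, 0 < x → 0 < f x)
    (hg : CompletelyMonotonicOn (fun x => x ^ (1 - lam) * deriv f x)) (n : ℕ)
    {ε δ : ℝ} (hε : 0 < ε) (hδ : 0 < δ) :
    ∃ x : ℝ, 0 < x ∧ x < δ ∧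
      x ^ ((n:ℝ) + lam) * ((-1:ℝ)^n * iteratedDeriv n (fun x => x ^ (1 - lam) * deriv f x) x)
        < ε := by
  set g : ℝ → ℝ := fun x => x ^ (1 - lam) * deriv f x with hgdef
  obtain ⟨C, hC, hb⟩ := G_chain hg n
  set K : ℝ := C * ((2:ℝ) ^ n) ^ lam with hK
  have h2n : (0:ℝ) < (2:ℝ)^n := by positivity
  have hKpos : 0 < K := mul_pos hC (Real.rpow_pos_of_pos h2n lam)
  obtain ⟨y, hy0, hyδ, hysm⟩ := small_x_mul_deriv hfs hfpos
    (div_pos hε hKpos) (div_pos hδ h2n)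
  set x : ℝ := 2^n * y with hxdef
  have hx0 : 0 < x := by positivity
  refine ⟨x, hx0, ?_, ?_⟩
  · rw [hxdef]
    calc (2:ℝ)^n * y < 2^n * (δ / 2^n) := by
          exact mul_lt_mul_of_pos_left hyδ h2n
      _ = δ := by field_simp
  · have hxy : x / 2 ^ n = y := by rw [hxdef]; field_simp
    have h1 := hb x hx0
    rw [hxy] at h1
    -- split the rpow
    have hsplit : x ^ ((n:ℝ) + lam) = x ^ lam * x ^ n := by
      rw [Real.rpow_add hx0, Real.rpow_natCast, mul_comm]
    have h2 : x ^ ((n:ℝ) + lam) * ((-1:ℝ)^n * iteratedDeriv n g x)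
        ≤ x ^ lam * (C * g y) := by
      rw [hsplit, mul_assoc]
      exact mul_le_mul_of_nonneg_left h1 (le_of_lt (Real.rpow_pos_of_pos hx0 lam))
    -- rewrite x ^ lam
    have hxlam : x ^ lam = ((2:ℝ)^n) ^ lam * y ^ lam := by
      rw [hxdef, Real.mul_rpow (le_of_lt h2n) (le_of_lt hy0)]
    have hgy : y ^ lam * g y = y * deriv f y := by
      rw [hgdef]
      simp only
      rw [← mul_assoc, ← Real.rpow_add hy0]
      norm_num
    have h3 : x ^ lam * (C * g y) = K * (y * deriv f y) := by
      rw [hxlam, hK, ← hgy]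
      ring
    have h4 : K * (y * deriv f y) < ε := by
      have := mul_lt_mul_of_pos_left hysm hKpos
      rwa [mul_div_cancel₀ _ (ne_of_gt hKpos)] at this
    calc x ^ ((n:ℝ) + lam) * ((-1:ℝ)^n * iteratedDeriv n g x) ≤ x ^ lam * (C * g y) := h2
      _ = K * (y * deriv f y) := h3
      _ < ε := h4

section Key

variable {lam : ℝ} {f : ℝ → ℝ}

private lemma R_rel (hlam : 0 < lam) (hfs : ContDiffOn ℝ (⊤ : ℕ∞) f (Set.Ioi 0))
    (hgs : ContDiffOn ℝ (⊤ : ℕ∞) (fun x => x ^ (1 - lam) * deriv f x) (Set.Ioi 0)) (n : ℕ) :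
    ∀ x : ℝ, 0 < x →
      x * iteratedDeriv (n+1) (fun y => y ^ (-lam) * f y) x
        + ((n:ℝ) + lam) * iteratedDeriv n (fun y => y ^ (-lam) * f y) x
      = iteratedDeriv n (fun y => y ^ (1 - lam) * deriv f y) x := by
  have hh : ContDiffOn ℝ (⊤ : ℕ∞) (fun y : ℝ => y ^ (-lam) * f y) (Set.Ioi 0) :=
    (contDiffOn_rpow_Ioi (-lam)).mul hfs
  induction n with
  | zero =>
      intro x hx
      have hmul : ∀ c : ℝ, x * x ^ c = x ^ (c+1) := by
        intro c
        rw [Real.rpow_add hx c 1, Real.rpow_one]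
        ring
      have d1 : HasDerivAt (fun y : ℝ => y ^ (-lam)) (-lam * x ^ (-lam - 1)) x :=
        Real.hasDerivAt_rpow_const (Or.inl (ne_of_gt hx))
      have d2 : HasDerivAt f (deriv f x) x :=
        (((hfs.differentiableOn (by simp)).differentiableAt (isOpen_Ioi.mem_nhds hx))).hasDerivAt
      have hDh : HasDerivAt (fun y : ℝ => y ^ (-lam) * f y)
          (-lam * x ^ (-lam - 1) * f x + x ^ (-lam) * deriv f x) x := d1.mul d2
      simp only [iteratedDeriv_one, iteratedDeriv_zero, Nat.cast_zero, zero_add]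
      rw [hDh.deriv]
      have e1 : x * x ^ (-lam - 1) = x ^ (-lam) := by
        rw [hmul]; norm_num
      have e2 : x * x ^ (-lam) = x ^ (1 - lam) := by
        rw [hmul]; ring_nf
      calc x * (-lam * x ^ (-lam - 1) * f x + x ^ (-lam) * deriv f x)
            + lam * (x ^ (-lam) * f x)
          = -lam * (x * x ^ (-lam - 1)) * f x + (x * x ^ (-lam)) * deriv f x
            + lam * (x ^ (-lam) * f x) := by ring
        _ = x ^ (1 - lam) * deriv f x := by rw [e1, e2]; ring
  | succ n IH =>
      intro x hx
      have heq : (fun y => y * iteratedDeriv (n+1) (fun z => z ^ (-lam) * f z) y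
          + ((n:ℝ) + lam) * iteratedDeriv n (fun z => z ^ (-lam) * f z) y)
          =ᶠ[nhds x] iteratedDeriv n (fun y => y ^ (1 - lam) * deriv f y) := by
        filter_upwards [isOpen_Ioi.mem_nhds hx] with y hy
        exact IH y hy
      have hdl := heq.deriv_eq
      have hΦ : HasDerivAt (fun y => y * iteratedDeriv (n+1) (fun z => z ^ (-lam) * f z) y
          + ((n:ℝ) + lam) * iteratedDeriv n (fun z => z ^ (-lam) * f z) y)
          (1 * iteratedDeriv (n+1) (fun z => z ^ (-lam) * f z) x
            + x * iteratedDeriv (n+2) (fun z => z ^ (-lam) * f z) x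
            + ((n:ℝ) + lam) * iteratedDeriv (n+1) (fun z => z ^ (-lam) * f z) x) x :=
        ((hasDerivAt_id x).mul (hasDerivAt_iteratedDeriv' hh (n+1) hx)).add
          ((hasDerivAt_iteratedDeriv' hh n hx).const_mul _)
      rw [hΦ.deriv] at hdl
      rw [iteratedDeriv_succ (n := n) (f := fun y => y ^ (1 - lam) * deriv f y), ← hdl]
      push_cast
      ring
end Key

private lemma CM_key {lam : ℝ} (hlam : 0 < lam) {f : ℝ → ℝ}
    (hfs : ContDiffOn ℝ (⊤ : ℕ∞) f (Set.Ioi 0)) (hfpos : ∀ x : ℝ, 0 < x → 0 < f x)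
    (hg : CompletelyMonotonicOn (fun x => x ^ (1 - lam) * deriv f x)) :
    CompletelyMonotonicOn (fun x => x ^ (-lam) * f x) := by
  have hh : ContDiffOn ℝ (⊤ : ℕ∞) (fun y : ℝ => y ^ (-lam) * f y) (Set.Ioi 0) :=
    (contDiffOn_rpow_Ioi (-lam)).mul hfs
  refine ⟨hh, ?_⟩
  intro n
  induction n with
  | zero =>
      intro x hx
      simp only [pow_zero, one_mul, iteratedDeriv_zero]
      exact le_of_lt (mul_pos (Real.rpow_pos_of_pos hx _) (hfpos x hx))
  | succ n IH =>
      intro x₀ hx₀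
      set h : ℝ → ℝ := fun y => y ^ (-lam) * f y with hhdef
      set η : ℝ → ℝ := fun y => (-1:ℝ)^(n+1) * (y ^ ((n:ℝ)+1+lam) * iteratedDeriv (n+1) h y)
        with hηdef
      have hR := R_rel hlam hfs hg.1
      -- derivative of η
      have hηd : ∀ y : ℝ, 0 < y → HasDerivAt η
          ((-1:ℝ)^(n+1) * (y ^ ((n:ℝ)+lam)
            * iteratedDeriv (n+1) (fun z => z ^ (1 - lam) * deriv f z) y)) y := by
        intro y hy
        have d1 : HasDerivAt (fun z : ℝ => z ^ ((n:ℝ)+1+lam))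
            (((n:ℝ)+1+lam) * y ^ ((n:ℝ)+1+lam - 1)) y :=
          Real.hasDerivAt_rpow_const (Or.inl (ne_of_gt hy))
        have d2 := (d1.mul (hasDerivAt_iteratedDeriv' hh (n+1) hy)).const_mul ((-1:ℝ)^(n+1))
        have e1 : ((n:ℝ)+1+lam - 1) = (n:ℝ)+lam := by ring
        have e2 : y ^ ((n:ℝ)+1+lam) = y * y ^ ((n:ℝ)+lam) := by
          rw [show ((n:ℝ)+1+lam) = ((n:ℝ)+lam) + 1 by ring, Real.rpow_add hy, Real.rpow_one]
          ring
        have hrel := hR (n+1) y hy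
        push_cast at hrel
        rw [← hhdef] at hrel
        have heq : (-1:ℝ)^(n+1) * (y ^ ((n:ℝ)+lam)
              * iteratedDeriv (n+1) (fun z => z ^ (1 - lam) * deriv f z) y)
            = (-1:ℝ)^(n+1) * (((n:ℝ)+1+lam) * y ^ ((n:ℝ)+1+lam - 1) * iteratedDeriv (n+1) h y
              + y ^ ((n:ℝ)+1+lam) * iteratedDeriv (n+1+1) h y) := by
          rw [e1, e2]
          linear_combination ((-1:ℝ)^n * y ^ ((n:ℝ)+lam)) * hrel
        rw [heq]
        exact d2
      -- η is monotone on Ioi 0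
      have hmono : MonotoneOn η (Set.Ioi 0) := by
        refine monotoneOn_of_deriv_nonneg (convex_Ioi 0) ?_ ?_ ?_
        · exact fun y hy => ((hηd y hy).continuousAt).continuousWithinAt
        · intro y hy
          rw [interior_Ioi] at hy
          exact ((hηd y hy).differentiableAt).differentiableWithinAt
        · intro y hy
          rw [interior_Ioi] at hy
          rw [(hηd y hy).deriv]
          have hs := hg.2 (n+1) y hy
          have hyp : (0:ℝ) ≤ y ^ ((n:ℝ)+lam) := le_of_lt (Real.rpow_pos_of_pos hy _)
          calc (0:ℝ) ≤ y ^ ((n:ℝ)+lam)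
              * ((-1:ℝ)^(n+1) * iteratedDeriv (n+1) (fun z => z ^ (1 - lam) * deriv f z) y) :=
                mul_nonneg hyp hs
            _ = (-1:ℝ)^(n+1) * (y ^ ((n:ℝ)+lam)
              * iteratedDeriv (n+1) (fun z => z ^ (1 - lam) * deriv f z) y) := by ring
      -- lower bound for η
      have hlb : ∀ y : ℝ, 0 < y →
          -(y ^ ((n:ℝ)+lam) * ((-1:ℝ)^n
            * iteratedDeriv n (fun z => z ^ (1 - lam) * deriv f z) y)) ≤ η y := by
        intro y hy
        have hrel := hR n y hy
        have hP : (0:ℝ) < y ^ ((n:ℝ)+lam) := Real.rpow_pos_of_pos hy _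
        have e2 : y ^ ((n:ℝ)+1+lam) = y * y ^ ((n:ℝ)+lam) := by
          rw [show ((n:ℝ)+1+lam) = ((n:ℝ)+lam) + 1 by ring, Real.rpow_add hy, Real.rpow_one]
          ring
        have iha := IH y hy
        have hnl : (0:ℝ) ≤ ((n:ℝ)+lam) := by positivity
        have key : (0:ℝ) ≤ ((n:ℝ)+lam) * (y ^ ((n:ℝ)+lam) * ((-1:ℝ)^n * iteratedDeriv n h y)) :=
          mul_nonneg hnl (mul_nonneg hP.le iha)
        have hid : η y = -(y ^ ((n:ℝ)+lam) * ((-1:ℝ)^n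
              * iteratedDeriv n (fun z => z ^ (1 - lam) * deriv f z) y))
            + ((n:ℝ)+lam) * (y ^ ((n:ℝ)+lam) * ((-1:ℝ)^n * iteratedDeriv n h y)) := by
          rw [hηdef]
          simp only
          rw [e2, ← hrel, pow_succ]
          ring
        linarith [key, hid.ge, hid.le]
      -- conclude η x₀ ≥ 0
      have hη0 : 0 ≤ η x₀ := by
        by_contra hneg
        push_neg at hneg
        obtain ⟨x, hx, hxlt, hxsm⟩ := G_small hlam hfs hfpos hg n (ε := -η x₀) (δ := x₀)
          (by linarith) hx₀
        have h1 := hmono (Set.mem_Ioi.mpr hx) (Set.mem_Ioi.mpr hx₀) (le_of_lt hxlt)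
        have h2 := hlb x hx
        linarith
      -- divide by the positive power
      have hPx : (0:ℝ) < x₀ ^ ((n:ℝ)+1+lam) := Real.rpow_pos_of_pos hx₀ _
      by_contra hneg
      push_neg at hneg
      have : η x₀ < 0 := by
        rw [hηdef]
        simp only
        calc (-1:ℝ)^(n+1) * (x₀ ^ ((n:ℝ)+1+lam) * iteratedDeriv (n+1) h x₀)
            = x₀ ^ ((n:ℝ)+1+lam) * ((-1:ℝ)^(n+1) * iteratedDeriv (n+1) h x₀) := by ring
          _ < 0 := mul_neg_of_pos_of_neg hPx hneg
      linarith

theorem product_of_genBernstein (lam₁ lam₂ : ℝ) (hl₁ : 0 < lam₁) (hl₂ : 0 < lam₂)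
    (f₁ f₂ : ℝ → ℝ)
    (hf₁smooth : ContDiffOn ℝ (⊤ : ℕ∞) f₁ (Set.Ioi 0)) (hf₁pos : ∀ x : ℝ, 0 < x → 0 < f₁ x)
    (hf₁ : CompletelyMonotonicOn (fun x => x ^ (1 - lam₁) * deriv f₁ x))
    (hf₂smooth : ContDiffOn ℝ (⊤ : ℕ∞) f₂ (Set.Ioi 0)) (hf₂pos : ∀ x : ℝ, 0 < x → 0 < f₂ x)
    (hf₂ : CompletelyMonotonicOn (fun x => x ^ (1 - lam₂) * deriv f₂ x)) :
    CompletelyMonotonicOn (fun x => x ^ (1 - lam₁ - lam₂) * deriv (fun y => f₁ y * f₂ y) x) := by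
  have h₁ := CM_key hl₁ hf₁smooth hf₁pos hf₁
  have h₂ := CM_key hl₂ hf₂smooth hf₂pos hf₂
  have A : CompletelyMonotonicOn
      (fun x => (x ^ (-lam₂) * f₂ x) * (x ^ (1 - lam₁) * deriv f₁ x)) := CM_mul h₂ hf₁
  have B : CompletelyMonotonicOn
      (fun x => (x ^ (-lam₁) * f₁ x) * (x ^ (1 - lam₂) * deriv f₂ x)) := CM_mul h₁ hf₂
  have hS : ContDiffOn ℝ (⊤ : ℕ∞) (fun x => (x ^ (-lam₂) * f₂ x) * (x ^ (1 - lam₁) * deriv f₁ x)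
      + (x ^ (-lam₁) * f₁ x) * (x ^ (1 - lam₂) * deriv f₂ x)) (Set.Ioi 0) := A.1.add B.1
  have hEq : Set.EqOn (fun x => x ^ (1 - lam₁ - lam₂) * deriv (fun y => f₁ y * f₂ y) x)
      (fun x => (x ^ (-lam₂) * f₂ x) * (x ^ (1 - lam₁) * deriv f₁ x)
        + (x ^ (-lam₁) * f₁ x) * (x ^ (1 - lam₂) * deriv f₂ x)) (Set.Ioi 0) := by
    intro x hx
    have hx' : (0:ℝ) < x := hx
    have d1 : HasDerivAt f₁ (deriv f₁ x) x :=
      (((hf₁smooth.differentiableOn (by simp)).differentiableAt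
        (isOpen_Ioi.mem_nhds hx'))).hasDerivAt
    have d2 : HasDerivAt f₂ (deriv f₂ x) x :=
      (((hf₂smooth.differentiableOn (by simp)).differentiableAt
        (isOpen_Ioi.mem_nhds hx'))).hasDerivAt
    have hder : deriv (fun y => f₁ y * f₂ y) x = deriv f₁ x * f₂ x + f₁ x * deriv f₂ x :=
      (d1.mul d2).deriv
    have e1 : x ^ (1 - lam₁ - lam₂) = x ^ (-lam₂) * x ^ (1 - lam₁) := by
      rw [← Real.rpow_add hx']
      congr 1
      ring
    have e2 : x ^ (1 - lam₁ - lam₂) = x ^ (-lam₁) * x ^ (1 - lam₂) := by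
      rw [← Real.rpow_add hx']
      congr 1
      ring
    simp only
    rw [hder]
    linear_combination (deriv f₁ x * f₂ x) * e1 + (f₁ x * deriv f₂ x) * e2
  constructor
  · exact hS.congr hEq
  · intro n x hx
    rw [hEq.iteratedDeriv_of_isOpen isOpen_Ioi n hx]
    have hadd := itD_add' (p := fun x => (x ^ (-lam₂) * f₂ x) * (x ^ (1 - lam₁) * deriv f₁ x))
      (q := fun x => (x ^ (-lam₁) * f₁ x) * (x ^ (1 - lam₂) * deriv f₂ x)) A.1 B.1 n hx
    rw [hadd, mul_add]
    exact add_nonneg (A.2 n x hx) (B.2 n x hx)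
end

section
/- Let λ > 0 and α < λ + 1, and let f : (0,∞) → (0,∞) be a C^∞ function in the higher order Thorin-Bernstein class T_{λ,α}, i.e. such that x ↦ x^{1-λ} f'(x) belongs to the generalized Stieltjes class S_{λ+1-α}. Let f(0) denote the (finite) limit of f(x) as x → 0⁺. Then the function x ↦ (f(x) - f(0))/x^λ belongs to S_{λ+1-α}. -/
open MeasureTheory Real Set Filter
open scoped ENNReal

lemma lintegral_Ioo_scale {x : ℝ} (hx : 0 < x) (F : ℝ → ℝ≥0∞) (hF : Measurable F) :
    ∫⁻ s in Ioo 0 x, F s = ∫⁻ u in Ioo (0:ℝ) 1, ENNReal.ofReal x * F (x * u) := by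
  rw [lintegral_const_mul _ (show Measurable fun u : ℝ => F (x*u) from hF.comp (measurable_const_mul x))]
  have hind : (fun u => ((Ioo 0 x).indicator F) (x * u)) = (Ioo (0:ℝ) 1).indicator (fun u => F (x * u)) := by
    funext u
    by_cases hu : u ∈ Ioo (0:ℝ) 1
    · rw [indicator_of_mem hu]
      exact indicator_of_mem (mem_Ioo.mpr ⟨mul_pos hx hu.1, by nlinarith [hu.1, hu.2]⟩) F
    · rw [indicator_of_notMem hu]
      refine indicator_of_notMem (fun hmem => hu ⟨?_, ?_⟩) F
      · nlinarith [hmem.1]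
      · nlinarith [hmem.2]
  have h1 : ∫⁻ u in Ioo (0:ℝ) 1, F (x * u) = ∫⁻ u, ((Ioo 0 x).indicator F) (x * u) := by
    rw [hind, lintegral_indicator measurableSet_Ioo _]
  have h2 : ∫⁻ u, ((Ioo 0 x).indicator F) (x * u)
      = ∫⁻ w, ((Ioo 0 x).indicator F) w ∂(Measure.map (x * ·) volume) := by
    rw [lintegral_map (hF.indicator measurableSet_Ioo) (measurable_const_mul x)]
  rw [h1, h2, Real.map_volume_mul_left hx.ne', lintegral_smul_measure,
    lintegral_indicator measurableSet_Ioo _, smul_eq_mul, ← mul_assoc, abs_of_pos (inv_pos.2 hx),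
    ← ENNReal.ofReal_mul hx.le, mul_inv_cancel₀ hx.ne', ENNReal.ofReal_one, one_mul]

lemma sigmaFinite_aux (μ : Measure ℝ) (h0 : μ (Iio 0) = 0)
    (hfin : ∀ n : ℕ, μ (Icc (0:ℝ) n) < ⊤) : SigmaFinite μ := by
  refine ⟨⟨⟨fun n => Iio 0 ∪ Icc 0 n, fun _ => trivial, fun n => ?_, ?_⟩⟩⟩
  · exact lt_of_le_of_lt (measure_union_le _ _) (by rw [h0, zero_add]; exact hfin n)
  · ext y
    simp only [mem_iUnion, mem_union, mem_Iio, mem_Icc, mem_univ, iff_true]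
    rcases lt_or_ge y 0 with hy | hy
    · exact ⟨0, Or.inl hy⟩
    · obtain ⟨n, hn⟩ := exists_nat_ge y
      exact ⟨n, Or.inr ⟨hy, hn⟩⟩

lemma lintegral_Ioo_rpow {lam : ℝ} (hlam : 0 < lam) :
    ∫⁻ u in Ioo (0:ℝ) 1, ENNReal.ofReal (u ^ (lam - 1)) = ENNReal.ofReal (1 / lam) := by
  have hii : IntervalIntegrable (fun u : ℝ => u ^ (lam - 1)) volume 0 1 :=
    intervalIntegral.intervalIntegrable_rpow' (by linarith)
  have hint : Integrable (fun u : ℝ => u ^ (lam - 1)) (volume.restrict (Ioo (0:ℝ) 1)) := by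
    have := (intervalIntegrable_iff_integrableOn_Ioo_of_le (by norm_num)).mp hii
    exact this
  rw [← ofReal_integral_eq_lintegral_ofReal hint]
  · congr 1
    have : ∫ u in (0:ℝ)..1, u ^ (lam - 1) = 1 / lam := by
      rw [integral_rpow (Or.inl (by linarith)), sub_add_cancel]
      rw [Real.one_rpow, Real.zero_rpow hlam.ne']
      norm_num
    rw [← this, intervalIntegral.integral_of_le (by norm_num : (0:ℝ) ≤ 1),
      integral_Ioc_eq_integral_Ioo]
  · filter_upwards [ae_restrict_mem measurableSet_Ioo] with u hu
    exact Real.rpow_nonneg hu.1.le _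

theorem thorinBernstein_sub_const_div_rpow (lam α : ℝ) (hlam : 0 < lam) (hα : α < lam + 1)
    (f : ℝ → ℝ)
    (hfsmooth : ContDiffOn ℝ (⊤ : ℕ∞) f (Set.Ioi 0)) (hfpos : ∀ x : ℝ, 0 < x → 0 < f x)
    (hf : IsGenStieltjes (lam + 1 - α) (fun x => x ^ (1 - lam) * deriv f x))
    (f0 : ℝ) (hf0 : Filter.Tendsto f (nhdsWithin 0 (Set.Ioi 0)) (nhds f0)) :
    IsGenStieltjes (lam + 1 - α) (fun x => (f x - f0) / x ^ lam) := by
  obtain ⟨μ, c, hμ0, hc, hμ⟩ := hf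
  set r : ℝ := lam + 1 - α with hr
  have hrpos : 0 < r := by rw [hr]; linarith
  have haeμ : ∀ᵐ t ∂μ, 0 ≤ t := by
    rw [ae_iff]
    convert hμ0 using 2
    ext t; simp [not_le]
  have hSF : SigmaFinite μ := by
    apply sigmaFinite_aux μ hμ0
    intro n
    have hint := (hμ 1 one_pos).1.hasFiniteIntegral
    rw [HasFiniteIntegral] at hint
    have hlow : ENNReal.ofReal ((1 + (n:ℝ)) ^ (-r)) * μ (Icc (0:ℝ) n) ≤
        ∫⁻ t, ‖(1 + t) ^ (-r)‖ₑ ∂μ := by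
      rw [← setLIntegral_const (Icc (0:ℝ) n) _]
      refine le_trans (setLIntegral_mono' measurableSet_Icc ?_) (setLIntegral_le_lintegral _ _)
      intro t ht
      have h1 : (0:ℝ) < 1 + t := by nlinarith [ht.1]
      rw [Real.enorm_eq_ofReal (Real.rpow_nonneg h1.le _)]
      apply ENNReal.ofReal_le_ofReal
      rw [Real.rpow_neg (by positivity), Real.rpow_neg h1.le]
      exact inv_anti₀ (Real.rpow_pos_of_pos h1 r)
        (Real.rpow_le_rpow h1.le (by linarith [ht.2]) hrpos.le)
    by_contra htop
    push_neg at htop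
    have hTOP : μ (Icc (0:ℝ) n) = ⊤ := top_le_iff.mp htop
    rw [hTOP, ENNReal.mul_top (by
      simp only [ne_eq, ENNReal.ofReal_eq_zero, not_le]
      positivity)] at hlow
    exact absurd (lt_of_le_of_lt hlow hint) (by simp)
  -- a.e. nonnegativity of the integrand
  have haeI : ∀ s : ℝ, 0 < s → (0 ≤ᵐ[μ] fun t => (s + t) ^ (-r)) := fun s hs =>
    haeμ.mono fun t ht => Real.rpow_nonneg (by linarith) _
  -- the derivative formula
  have hderiv : ∀ s : ℝ, 0 < s →
      deriv f s = s ^ (lam - 1) * ((∫ t, (s + t) ^ (-r) ∂μ) + c) := by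
    intro s hs
    have h2 := (hμ s hs).2
    simp only [] at h2
    have h1 : s ^ (lam - 1) * s ^ (1 - lam) = 1 := by
      rw [← Real.rpow_add hs]; norm_num
    calc deriv f s = (s ^ (lam - 1) * s ^ (1 - lam)) * deriv f s := by rw [h1, one_mul]
      _ = s ^ (lam - 1) * (s ^ (1 - lam) * deriv f s) := by ring
      _ = _ := by rw [h2]
  have hdnn : ∀ s : ℝ, 0 < s → 0 ≤ deriv f s := by
    intro s hs
    rw [hderiv s hs]
    exact mul_nonneg (Real.rpow_nonneg hs.le _)
      (add_nonneg (integral_nonneg_of_ae (haeI s hs)) hc)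
  -- ofReal version
  have hL : ∀ s : ℝ, 0 < s → ENNReal.ofReal (deriv f s) =
      ENNReal.ofReal (s ^ (lam - 1)) *
        ((∫⁻ t, ENNReal.ofReal ((s + t) ^ (-r)) ∂μ) + ENNReal.ofReal c) := by
    intro s hs
    rw [hderiv s hs, ENNReal.ofReal_mul (Real.rpow_nonneg hs.le _),
      ENNReal.ofReal_add (integral_nonneg_of_ae (haeI s hs)) hc,
      ofReal_integral_eq_lintegral_ofReal (hμ s hs).1 (haeI s hs)]
  -- FTC
  have hdOn : DifferentiableOn ℝ f (Ioi 0) := hfsmooth.differentiableOn (by simp)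
  have hdAt : ∀ s : ℝ, 0 < s → HasDerivAt f (deriv f s) s := fun s hs =>
    (hdOn.differentiableAt (isOpen_Ioi.mem_nhds hs)).hasDerivAt
  have hdc : ContinuousOn (deriv f) (Ioi 0) :=
    hfsmooth.continuousOn_deriv_of_isOpen isOpen_Ioi (by simp)
  have hFTC : ∀ ε x : ℝ, 0 < ε → ε ≤ x → ∫ s in ε..x, deriv f s = f x - f ε := by
    intro ε x hε hεx
    have hsub : uIcc ε x ⊆ Ioi 0 := by
      rw [uIcc_of_le hεx]; exact fun s hs => lt_of_lt_of_le hε hs.1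
    exact intervalIntegral.integral_eq_sub_of_hasDerivAt (fun s hs => hdAt s (hsub hs))
      ((hdc.mono hsub).intervalIntegrable)
  have hfle : ∀ x : ℝ, 0 < x → f0 ≤ f x := by
    intro x hx
    have hev : ∀ᶠ ε in nhdsWithin 0 (Ioi 0), f ε ≤ f x := by
      filter_upwards [Ioo_mem_nhdsGT_of_mem (left_mem_Ico.mpr hx)] with ε hε
      have h1 := hFTC ε x hε.1 hε.2.le
      have hnn : 0 ≤ ∫ s in ε..x, deriv f s :=
        intervalIntegral.integral_nonneg hε.2.le
          (fun s hs => hdnn s (lt_of_lt_of_le hε.1 hs.1))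
      linarith [h1 ▸ hnn]
    exact le_of_tendsto hf0 hev
  -- monotone-convergence limit
  have hgmeas : Measurable fun s : ℝ => ENNReal.ofReal (deriv f s) :=
    (measurable_deriv f).ennreal_ofReal
  have hlimit : ∀ x : ℝ, 0 < x → ENNReal.ofReal (f x - f0) =
      ∫⁻ s in Ioo 0 x, ENNReal.ofReal (deriv f s) := by
    intro x hx
    set g : ℝ → ℝ≥0∞ := fun s => ENNReal.ofReal (deriv f s) with hg
    set a : ℕ → ℝ := fun n => x / (n + 1) with ha
    have hapos : ∀ n, 0 < a n := fun n => div_pos hx (by positivity)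
    have halex : ∀ n, a n ≤ x := by
      intro n
      rw [ha]
      rw [div_le_iff₀ (by positivity)]
      nlinarith [Nat.cast_nonneg (α := ℝ) n]
    have hamono : ∀ n, a (n + 1) ≤ a n := by
      intro n
      rw [ha]
      have h1 : (0:ℝ) < (n:ℝ) + 1 := by positivity
      apply div_le_div_of_nonneg_left hx.le h1
      push_cast; linarith
    have hIn : ∀ n, ∫⁻ s in Ioo (a n) x, g s = ENNReal.ofReal (f x - f (a n)) := by
      intro n
      have hicc : Icc (a n) x ⊆ Ioi 0 := fun s hs => lt_of_lt_of_le (hapos n) hs.1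
      have hint : IntegrableOn (deriv f) (Ioo (a n) x) volume :=
        ((hdc.mono hicc).integrableOn_Icc).mono_set Ioo_subset_Icc_self
      rw [hg, ← ofReal_integral_eq_lintegral_ofReal hint ?_]
      · congr 1
        rw [← integral_Ioc_eq_integral_Ioo, ← intervalIntegral.integral_of_le (halex n)]
        exact hFTC (a n) x (hapos n) (halex n)
      · filter_upwards [ae_restrict_mem measurableSet_Ioo] with s hs
        exact hdnn s (lt_of_lt_of_le (hapos n) hs.1.le)
    have hmono2 : Monotone fun n => ∫⁻ s in Ioo (a n) x, g s := by
      apply monotone_nat_of_le_succ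
      intro n
      exact lintegral_mono_set (Ioo_subset_Ioo_left (hamono n))
    have hsup : (⨆ n, ∫⁻ s in Ioo (a n) x, g s) = ∫⁻ s in Ioo 0 x, g s := by
      have h1 : ∀ n, ∫⁻ s in Ioo (a n) x, g s = ∫⁻ s, (Ioo (a n) x).indicator g s := by
        intro n; rw [lintegral_indicator measurableSet_Ioo]
      have h2 : ∫⁻ s in Ioo 0 x, g s = ∫⁻ s, (Ioo 0 x).indicator g s := by
        rw [lintegral_indicator measurableSet_Ioo]
      simp_rw [h1, h2]
      rw [← lintegral_iSup (fun n => hgmeas.indicator measurableSet_Ioo) ?_]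
      · congr 1
        funext s
        refine le_antisymm (iSup_le fun n =>
          indicator_le_indicator_of_subset (Ioo_subset_Ioo_left (hapos n).le)
            (fun _ => zero_le) s) ?_
        by_cases hs : s ∈ Ioo 0 x
        · obtain ⟨n, hn⟩ := exists_nat_gt (x / s)
          have hans : a n < s := by
            rw [ha]
            rw [div_lt_iff₀ (by positivity)]
            have h3 : x / s < (n:ℝ) + 1 := lt_trans hn (lt_add_one _)
            have h4 := (div_lt_iff₀ hs.1).mp h3
            linarith [h4]
          rw [indicator_of_mem hs]
          calc g s = (Ioo (a n) x).indicator g s := (indicator_of_mem (mem_Ioo.mpr ⟨hans, hs.2⟩) g).symm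
            _ ≤ ⨆ m, (Ioo (a m) x).indicator g s := le_iSup (fun m => (Ioo (a m) x).indicator g s) n
        · rw [indicator_of_notMem hs]; exact zero_le
      · -- monotone family of indicator functions
        intro n m hnm
        have : a m ≤ a n := antitone_nat_of_succ_le hamono hnm
        exact indicator_le_indicator_of_subset (Ioo_subset_Ioo_left this) (fun _ => zero_le)
    have hta : Tendsto a atTop (nhdsWithin 0 (Ioi 0)) := by
      rw [tendsto_nhdsWithin_iff]
      constructor
      · rw [ha]
        apply Tendsto.div_atTop tendsto_const_nhds
        exact tendsto_atTop_add_const_right _ 1 tendsto_natCast_atTop_atTop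
      · exact Eventually.of_forall fun n => hapos n
    have htnd : Tendsto (fun n => ENNReal.ofReal (f x - f (a n))) atTop
        (nhds (ENNReal.ofReal (f x - f0))) := by
      apply (ENNReal.continuous_ofReal.tendsto _).comp
      exact Tendsto.sub tendsto_const_nhds (hf0.comp hta)
    have := tendsto_nhds_unique (tendsto_atTop_iSup hmono2) (by simp_rw [hIn]; exact htnd)
    rw [← hsup, this]
  -- construction of the representing measure
  set dens : ℝ → ℝ≥0∞ := fun u => ENNReal.ofReal (u ^ (α - 2)) with hdens
  set m1 : Measure ℝ := (volume.restrict (Ioc (0:ℝ) 1)).withDensity dens with hm1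
  set ν : Measure ℝ := (m1.prod μ).map (fun p : ℝ × ℝ => p.2 / p.1) with hν
  have hT : Measurable fun p : ℝ × ℝ => p.2 / p.1 := measurable_snd.div measurable_fst
  have hν0 : ν (Iio 0) = 0 := by
    rw [hν, Measure.map_apply hT measurableSet_Iio]
    have hsub : (fun p : ℝ × ℝ => p.2 / p.1) ⁻¹' (Iio 0) ⊆
        (Ioc (0:ℝ) 1 ×ˢ Iio 0) ∪ ((Ioc (0:ℝ) 1)ᶜ ×ˢ univ) := by
      rintro ⟨u, t⟩ hp
      simp only [mem_preimage, mem_Iio] at hp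
      by_cases hu : u ∈ Ioc (0:ℝ) 1
      · left
        refine ⟨hu, ?_⟩
        simp only [mem_Iio]
        by_contra ht
        push_neg at ht
        exact absurd hp (not_lt.mpr (div_nonneg ht hu.1.le))
      · exact Or.inr ⟨hu, trivial⟩
    refine measure_mono_null hsub (measure_union_null ?_ ?_)
    · rw [Measure.prod_prod, hμ0, mul_zero]
    · rw [Measure.prod_prod]
      have hz : m1 ((Ioc (0:ℝ) 1)ᶜ) = 0 := by
        apply withDensity_absolutelyContinuous (volume.restrict (Ioc (0:ℝ) 1)) dens
        rw [Measure.restrict_apply measurableSet_Ioc.compl]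
        simp
      rw [hz, zero_mul]
  have haeν : ∀ᵐ w ∂ν, 0 ≤ w := by
    rw [ae_iff]
    convert hν0 using 2
    ext w; simp [not_le]
  -- the change-of-variables identity for ν
  have hNu : ∀ x : ℝ, 0 < x → (∫⁻ w, ENNReal.ofReal ((x + w) ^ (-r)) ∂ν) =
      ∫⁻ u in Ioo (0:ℝ) 1, ENNReal.ofReal (u ^ (lam - 1)) *
        ∫⁻ t, ENNReal.ofReal ((x * u + t) ^ (-r)) ∂μ := by
    intro x hx
    rw [hν, lintegral_map (by fun_prop) hT]
    rw [lintegral_prod _ (by fun_prop : Measurable fun p : ℝ × ℝ =>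
      ENNReal.ofReal ((x + p.2 / p.1) ^ (-r))).aemeasurable]
    have hGmeas : Measurable fun u : ℝ => ∫⁻ t, ENNReal.ofReal ((x + t / u) ^ (-r)) ∂μ :=
      Measurable.lintegral_prod_right'
        (f := fun p : ℝ × ℝ => ENNReal.ofReal ((x + p.2 / p.1) ^ (-r))) (by fun_prop)
    rw [hm1, lintegral_withDensity_eq_lintegral_mul _ (by fun_prop) hGmeas]
    rw [show volume.restrict (Ioc (0:ℝ) 1) = volume.restrict (Ioo (0:ℝ) 1) from
      (Measure.restrict_congr_set Ioo_ae_eq_Ioc).symm]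
    refine setLIntegral_congr_fun measurableSet_Ioo (fun u hu => ?_)
    have hu0 : 0 < u := hu.1
    simp only [Pi.mul_apply, hdens]
    rw [← lintegral_const_mul _ (by fun_prop), ← lintegral_const_mul _ (by fun_prop)]
    refine lintegral_congr_ae (haeμ.mono fun t ht => ?_)
    beta_reduce
    rw [← ENNReal.ofReal_mul (Real.rpow_nonneg hu0.le _),
      ← ENNReal.ofReal_mul (Real.rpow_nonneg hu0.le _)]
    congr 1
    have hxut : 0 ≤ x * u + t := add_nonneg (mul_pos hx hu0).le ht
    have h1 : x + t / u = (x * u + t) / u := by field_simp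
    rw [h1, Real.div_rpow hxut hu0.le]
    calc u ^ (α - 2) * ((x * u + t) ^ (-r) / u ^ (-r))
        = (u ^ (α - 2) * u ^ r) * (x * u + t) ^ (-r) := by
          rw [Real.rpow_neg hu0.le r, div_eq_mul_inv, inv_inv]; ring
      _ = u ^ (lam - 1) * (x * u + t) ^ (-r) := by
          rw [← Real.rpow_add hu0]
          congr 2
          rw [hr]; ring
  -- measurability helpers
  have hGm : Measurable fun s : ℝ => ∫⁻ t, ENNReal.ofReal ((s + t) ^ (-r)) ∂μ :=
    Measurable.lintegral_prod_right'
      (f := fun p : ℝ × ℝ => ENNReal.ofReal ((p.1 + p.2) ^ (-r))) (by fun_prop)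
  have hFm : Measurable fun s : ℝ => ENNReal.ofReal (s ^ (lam - 1)) *
      ((∫⁻ t, ENNReal.ofReal ((s + t) ^ (-r)) ∂μ) + ENNReal.ofReal c) :=
    (by fun_prop : Measurable fun s : ℝ => ENNReal.ofReal (s ^ (lam - 1))).mul
      (hGm.add measurable_const)
  have hGxm : ∀ x : ℝ, Measurable fun u : ℝ => ∫⁻ t, ENNReal.ofReal ((x * u + t) ^ (-r)) ∂μ :=
    fun x => Measurable.lintegral_prod_right'
      (f := fun p : ℝ × ℝ => ENNReal.ofReal ((x * p.1 + p.2) ^ (-r))) (by fun_prop)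
  -- the key identity
  have hkey : ∀ x : ℝ, 0 < x → ENNReal.ofReal (f x - f0) =
      ENNReal.ofReal (x ^ lam) *
        ((∫⁻ w, ENNReal.ofReal ((x + w) ^ (-r)) ∂ν) + ENNReal.ofReal (c / lam)) := by
    intro x hx
    calc ENNReal.ofReal (f x - f0)
        = ∫⁻ s in Ioo 0 x, ENNReal.ofReal (deriv f s) := hlimit x hx
      _ = ∫⁻ s in Ioo 0 x, ENNReal.ofReal (s ^ (lam - 1)) *
            ((∫⁻ t, ENNReal.ofReal ((s + t) ^ (-r)) ∂μ) + ENNReal.ofReal c) :=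
        setLIntegral_congr_fun measurableSet_Ioo (fun s hs => hL s hs.1)
      _ = ∫⁻ u in Ioo (0:ℝ) 1, ENNReal.ofReal x * (ENNReal.ofReal ((x * u) ^ (lam - 1)) *
            ((∫⁻ t, ENNReal.ofReal ((x * u + t) ^ (-r)) ∂μ) + ENNReal.ofReal c)) :=
        lintegral_Ioo_scale hx _ hFm
      _ = ∫⁻ u in Ioo (0:ℝ) 1, ENNReal.ofReal (x ^ lam) * (ENNReal.ofReal (u ^ (lam - 1)) *
            ((∫⁻ t, ENNReal.ofReal ((x * u + t) ^ (-r)) ∂μ) + ENNReal.ofReal c)) := by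
        refine setLIntegral_congr_fun measurableSet_Ioo (fun u hu => ?_)
        have hu0 : 0 < u := hu.1
        have hxx : x * x ^ (lam - 1) = x ^ lam := by
          nth_rewrite 1 [← Real.rpow_one x]
          rw [← Real.rpow_add hx]; ring_nf
        rw [Real.mul_rpow hx.le hu0.le,
          ENNReal.ofReal_mul (Real.rpow_nonneg hx.le _), ← mul_assoc, ← mul_assoc,
          ← ENNReal.ofReal_mul hx.le, hxx, mul_assoc]
      _ = ENNReal.ofReal (x ^ lam) * ∫⁻ u in Ioo (0:ℝ) 1, ENNReal.ofReal (u ^ (lam - 1)) *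
            ((∫⁻ t, ENNReal.ofReal ((x * u + t) ^ (-r)) ∂μ) + ENNReal.ofReal c) :=
        lintegral_const_mul _ ((by fun_prop : Measurable fun u : ℝ =>
          ENNReal.ofReal (u ^ (lam - 1))).mul ((hGxm x).add measurable_const))
      _ = ENNReal.ofReal (x ^ lam) *
            ((∫⁻ u in Ioo (0:ℝ) 1, ENNReal.ofReal (u ^ (lam - 1)) *
              ∫⁻ t, ENNReal.ofReal ((x * u + t) ^ (-r)) ∂μ) +
             ∫⁻ u in Ioo (0:ℝ) 1, ENNReal.ofReal c * ENNReal.ofReal (u ^ (lam - 1))) := by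
        congr 1
        simp_rw [mul_add, mul_comm (ENNReal.ofReal (_ ^ (lam - 1))) (ENNReal.ofReal c)]
        rw [lintegral_add_left (f := fun u : ℝ =>
          ENNReal.ofReal (u ^ (lam - 1)) * ∫⁻ t, ENNReal.ofReal ((x * u + t) ^ (-r)) ∂μ)
          ((by fun_prop : Measurable fun u : ℝ =>
          ENNReal.ofReal (u ^ (lam - 1))).mul (hGxm x))]
      _ = ENNReal.ofReal (x ^ lam) *
            ((∫⁻ w, ENNReal.ofReal ((x + w) ^ (-r)) ∂ν) + ENNReal.ofReal (c / lam)) := by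
        rw [← hNu x hx, lintegral_const_mul _ (by fun_prop), lintegral_Ioo_rpow hlam,
          ← ENNReal.ofReal_mul hc, mul_one_div]
  -- final assembly
  refine ⟨ν, c / lam, hν0, div_nonneg hc hlam.le, fun x hx => ?_⟩
  have hk := hkey x hx
  have hmeasw : Measurable fun w : ℝ => (x + w) ^ (-r) := by fun_prop
  have hnnw : 0 ≤ᵐ[ν] fun w => (x + w) ^ (-r) :=
    haeν.mono fun w hw => Real.rpow_nonneg (by linarith) _
  have hfin : (∫⁻ w, ENNReal.ofReal ((x + w) ^ (-r)) ∂ν) ≠ ⊤ := by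
    intro htop
    rw [htop, top_add _, ENNReal.mul_top (by
      simp only [ne_eq, ENNReal.ofReal_eq_zero, not_le]
      positivity)] at hk
    exact ENNReal.ofReal_ne_top hk
  have hIgr : Integrable (fun w => (x + w) ^ (-r)) ν := by
    refine ⟨hmeasw.aestronglyMeasurable, ?_⟩
    rw [hasFiniteIntegral_iff_ofReal hnnw]
    exact lt_top_iff_ne_top.mpr hfin
  refine ⟨hIgr, ?_⟩
  have hIv : ∫ w, (x + w) ^ (-r) ∂ν = (∫⁻ w, ENNReal.ofReal ((x + w) ^ (-r)) ∂ν).toReal := by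
    rw [integral_eq_lintegral_of_nonneg_ae hnnw hmeasw.aestronglyMeasurable]
  have hx0 : (0:ℝ) < x ^ lam := Real.rpow_pos_of_pos hx lam
  have htr := congrArg ENNReal.toReal hk
  rw [ENNReal.toReal_ofReal (sub_nonneg.mpr (hfle x hx)), ENNReal.toReal_mul,
    ENNReal.toReal_add hfin ENNReal.ofReal_ne_top, ENNReal.toReal_ofReal hx0.le,
    ENNReal.toReal_ofReal (div_nonneg hc hlam.le)] at htr
  show (f x - f0) / x ^ lam = (∫ t, (x + t) ^ (-r) ∂ν) + c / lam
  rw [hIv, htr, mul_div_cancel_left₀ _ hx0.ne']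
end

section
/- Let λ ≥ 1 and let f : (0,∞) → (0,∞) be a C^∞ function in the generalized Bernstein class B_1 (i.e. f' is completely monotonic) such that x ↦ f(x)/x is logarithmically completely monotonic. Then f^λ belongs to B_λ, i.e. the function x ↦ x^{1-λ} (f(x)^λ)' = λ (f(x)/x)^{λ-1} f'(x) is completely monotonic on (0,∞). -/
open Real Set

namespace CMAux

lemma udo : UniqueDiffOn ℝ (Set.Ioi (0:ℝ)) := isOpen_Ioi.uniqueDiffOn

lemma iterDW_eq (n : ℕ) (f : ℝ → ℝ) {x : ℝ} (hx : x ∈ Set.Ioi (0:ℝ)) :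
    iteratedDerivWithin n f (Set.Ioi 0) x = iteratedDeriv n f x := by
  rw [iteratedDerivWithin_eq_iteratedFDerivWithin, iteratedDeriv_eq_iteratedFDeriv,
    iteratedFDerivWithin_of_isOpen n isOpen_Ioi hx]

/-- sign condition up to order `n`. -/
def SignTo (n : ℕ) (f : ℝ → ℝ) : Prop :=
  ∀ m, m ≤ n → ∀ x ∈ Set.Ioi (0:ℝ), 0 ≤ (-1:ℝ) ^ m * iteratedDerivWithin m f (Set.Ioi 0) x

lemma SignTo.mono {n m : ℕ} {f : ℝ → ℝ} (h : SignTo n f) (hmn : m ≤ n) : SignTo m f :=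
  fun k hk => h k (hk.trans hmn)

lemma signTo_negDeriv {n : ℕ} {f : ℝ → ℝ} (hsign : SignTo (n + 1) f) :
    SignTo n (fun y => -derivWithin f (Set.Ioi 0) y) := by
  intro m hm x hx
  have h1 := hsign (m + 1) (by omega) x hx
  rw [iteratedDerivWithin_succ'] at h1
  rw [iteratedDerivWithin_fun_neg]
  calc (0:ℝ) ≤ (-1:ℝ) ^ (m+1) * iteratedDerivWithin m (derivWithin f (Set.Ioi 0)) (Set.Ioi 0) x := h1
    _ = (-1:ℝ) ^ m * -iteratedDerivWithin m (derivWithin f (Set.Ioi 0)) (Set.Ioi 0) x := by ring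

lemma smooth_negDeriv {f : ℝ → ℝ} (hf : ContDiffOn ℝ (⊤ : ℕ∞) f (Set.Ioi 0)) :
    ContDiffOn ℝ (⊤ : ℕ∞) (fun y => -derivWithin f (Set.Ioi 0) y) (Set.Ioi 0) :=
  (hf.derivWithin udo (by simp)).neg

/-- Product of completely monotonic-type functions. -/
lemma prod_sign : ∀ (n : ℕ) (f g : ℝ → ℝ), ContDiffOn ℝ (⊤ : ℕ∞) f (Set.Ioi 0) →
    ContDiffOn ℝ (⊤ : ℕ∞) g (Set.Ioi 0) → SignTo n f → SignTo n g → ∀ x ∈ Set.Ioi (0:ℝ),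
    0 ≤ (-1:ℝ) ^ n * iteratedDerivWithin n (fun y => f y * g y) (Set.Ioi 0) x := by
  intro n
  induction n with
  | zero =>
    intro f g _ _ hf hg x hx
    have h1 := hf 0 le_rfl x hx
    have h2 := hg 0 le_rfl x hx
    simp only [iteratedDerivWithin_zero, pow_zero, one_mul] at h1 h2 ⊢
    exact mul_nonneg h1 h2
  | succ n IH =>
    intro f g hfs hgs hf hg x hx
    rw [iteratedDerivWithin_succ']
    set F1 : ℝ → ℝ := fun y => -((-derivWithin f (Set.Ioi 0) y) * g y) with hF1
    set F2 : ℝ → ℝ := fun y => -(f y * (-derivWithin g (Set.Ioi 0) y)) with hF2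
    have hEq : Set.EqOn (derivWithin (fun y => f y * g y) (Set.Ioi 0)) (F1 + F2) (Set.Ioi 0) := by
      intro y hy
      have hdf : DifferentiableWithinAt ℝ f (Set.Ioi 0) y :=
        (hfs.differentiableOn (by simp)) y hy
      have hdg : DifferentiableWithinAt ℝ g (Set.Ioi 0) y :=
        (hgs.differentiableOn (by simp)) y hy
      have := derivWithin_fun_mul hdf hdg
      simp only [Pi.add_apply, hF1, hF2]
      rw [this]; ring
    rw [iteratedDerivWithin_congr hEq hx]
    have hF1s : ContDiffOn ℝ (⊤ : ℕ∞) F1 (Set.Ioi 0) := ((smooth_negDeriv hfs).mul hgs).neg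
    have hF2s : ContDiffOn ℝ (⊤ : ℕ∞) F2 (Set.Ioi 0) := (hfs.mul (smooth_negDeriv hgs)).neg
    rw [iteratedDerivWithin_add hx udo ((hF1s.of_le (by exact_mod_cast le_top)) x hx) ((hF2s.of_le (by exact_mod_cast le_top)) x hx)]
    have e1 : iteratedDerivWithin n F1 (Set.Ioi 0) x
        = -iteratedDerivWithin n (fun y => (-derivWithin f (Set.Ioi 0) y) * g y) (Set.Ioi 0) x :=
      iteratedDerivWithin_fun_neg _
    have e2 : iteratedDerivWithin n F2 (Set.Ioi 0) x
        = -iteratedDerivWithin n (fun y => f y * (-derivWithin g (Set.Ioi 0) y)) (Set.Ioi 0) x :=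
      iteratedDerivWithin_fun_neg _
    have hA := IH (fun y => -derivWithin f (Set.Ioi 0) y) g (smooth_negDeriv hfs) hgs
      (signTo_negDeriv hf) (hg.mono (Nat.le_succ n)) x hx
    have hB := IH f (fun y => -derivWithin g (Set.Ioi 0) y) hfs (smooth_negDeriv hgs)
      (hf.mono (Nat.le_succ n)) (signTo_negDeriv hg) x hx
    rw [e1, e2]
    set A := iteratedDerivWithin n (fun y => (-derivWithin f (Set.Ioi 0) y) * g y) (Set.Ioi 0) x
    set B := iteratedDerivWithin n (fun y => f y * (-derivWithin g (Set.Ioi 0) y)) (Set.Ioi 0) x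
    have : (-1:ℝ) ^ (n+1) * (-A + -B) = (-1:ℝ) ^ n * A + (-1:ℝ) ^ n * B := by ring
    rw [this]
    exact add_nonneg hA hB

/-- exp of a function whose negated derivative is completely monotonic. -/
lemma exp_sign (h : ℝ → ℝ) (hh : ContDiffOn ℝ (⊤ : ℕ∞) h (Set.Ioi 0))
    (hsign : ∀ n, SignTo n (fun y => -derivWithin h (Set.Ioi 0) y)) :
    ∀ n, SignTo n (fun y => Real.exp (h y)) := by
  have hexps : ContDiffOn ℝ (⊤ : ℕ∞) (fun y => Real.exp (h y)) (Set.Ioi 0) := hh.exp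
  intro n
  induction n with
  | zero =>
    intro m hm x hx
    interval_cases m
    simp only [iteratedDerivWithin_zero, pow_zero, one_mul]
    exact (Real.exp_pos _).le
  | succ n IH =>
    intro m hm x hx
    rcases Nat.lt_succ_iff_lt_or_eq.mp (Nat.lt_succ_of_le hm) with hlt | rfl
    · exact IH m (Nat.lt_succ_iff.mp hlt) x hx
    · rw [iteratedDerivWithin_succ']
      have hEq : Set.EqOn (derivWithin (fun y => Real.exp (h y)) (Set.Ioi 0))
          (fun y => -((-derivWithin h (Set.Ioi 0) y) * Real.exp (h y))) (Set.Ioi 0) := by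
        intro y hy
        have hdh : HasDerivWithinAt h (derivWithin h (Set.Ioi 0) y) (Set.Ioi 0) y :=
          ((hh.differentiableOn (by simp)) y hy).hasDerivWithinAt
        have := hdh.exp.derivWithin (udo.uniqueDiffWithinAt hy)
        rw [this]; ring
      rw [iteratedDerivWithin_congr hEq hx, iteratedDerivWithin_fun_neg]
      have hP := prod_sign n (fun y => -derivWithin h (Set.Ioi 0) y) (fun y => Real.exp (h y))
        (smooth_negDeriv hh) hexps (hsign n) IH x hx
      set A := iteratedDerivWithin n
        (fun y => (-derivWithin h (Set.Ioi 0) y) * Real.exp (h y)) (Set.Ioi 0) x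
      calc (0:ℝ) ≤ (-1:ℝ) ^ n * A := hP
        _ = (-1:ℝ) ^ (n+1) * -A := by ring

end CMAux

open CMAux in
theorem rpow_of_bernstein_with_logCM (lam : ℝ) (hlam : 1 ≤ lam) (f : ℝ → ℝ)
    (hfsmooth : ContDiffOn ℝ (⊤ : ℕ∞) f (Set.Ioi 0)) (hfpos : ∀ x : ℝ, 0 < x → 0 < f x)
    (hf : CompletelyMonotonicOn (deriv f))
    (hlog : CompletelyMonotonicOn (fun x => -deriv (fun y => Real.log (f y / y)) x)) :
    CompletelyMonotonicOn (fun x => x ^ (1 - lam) * deriv (fun y => f y ^ lam) x) := by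
  set s : Set ℝ := Set.Ioi (0:ℝ) with hs
  -- the auxiliary function h
  set h : ℝ → ℝ := fun y => (lam - 1) * Real.log (f y / y) with hhdef
  have hdivpos : ∀ x ∈ s, 0 < f x / x := fun x hx => div_pos (hfpos x hx) hx
  have hdiv_smooth : ContDiffOn ℝ (⊤ : ℕ∞) (fun y => f y / y) s := by
    have : ContDiffOn ℝ (⊤ : ℕ∞) (f / fun y => y) s :=
      hfsmooth.div contDiffOn_id (fun x hx => ne_of_gt hx)
    exact this.congr fun x _ => rfl
  have hlog_smooth : ContDiffOn ℝ (⊤ : ℕ∞) (fun y => Real.log (f y / y)) s :=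
    hdiv_smooth.log fun x hx => (hdivpos x hx).ne'
  have hh_smooth : ContDiffOn ℝ (⊤ : ℕ∞) h s := contDiffOn_const.mul hlog_smooth
  -- the negated derivative of h is completely monotonic (within)
  have hsign : ∀ n, SignTo n (fun y => -derivWithin h s y) := by
    intro n m hm x hx
    have hEq : Set.EqOn (fun y => -derivWithin h s y)
        (fun y => (lam - 1) * (-deriv (fun z => Real.log (f z / z)) y)) s := by
      intro y hy
      have hdl : DifferentiableAt ℝ (fun z => Real.log (f z / z)) y :=
        ((hlog_smooth.contDiffAt (isOpen_Ioi.mem_nhds hy)).differentiableAt (by simp))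
      have hdw : derivWithin h s y = deriv h y := derivWithin_of_isOpen isOpen_Ioi hy
      show -derivWithin h s y = (lam - 1) * (-deriv (fun z => Real.log (f z / z)) y)
      rw [hdw, hhdef, deriv_const_mul _ hdl]
      ring
    rw [iteratedDerivWithin_congr hEq hx]
    rw [iteratedDerivWithin_const_mul hx udo _ ((hlog.1.of_le (by exact_mod_cast le_top)) x hx)]
    rw [iterDW_eq m _ hx]
    have := hlog.2 m x hx
    calc (0:ℝ) ≤ (lam - 1) * ((-1:ℝ) ^ m * iteratedDeriv m (fun z => -deriv (fun y => Real.log (f y / y)) z) x) := by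
          exact mul_nonneg (by linarith) (by simpa using this)
      _ = (-1:ℝ) ^ m * ((lam - 1) * iteratedDeriv m (fun z => -deriv (fun y => Real.log (f y / y)) z) x) := by ring
  have hexp : ∀ n, SignTo n (fun y => Real.exp (h y)) := exp_sign h hh_smooth hsign
  have hexps : ContDiffOn ℝ (⊤ : ℕ∞) (fun y => Real.exp (h y)) s := hh_smooth.exp
  -- deriv f sign within
  have hdf_sign : ∀ n, SignTo n (deriv f) := by
    intro n m hm x hx
    rw [iterDW_eq m _ hx]
    exact hf.2 m x hx
  -- the nice form F
  set F : ℝ → ℝ := fun y => lam * (Real.exp (h y) * deriv f y) with hFdef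
  have hF_smooth : ContDiffOn ℝ (⊤ : ℕ∞) F s := contDiffOn_const.mul (hexps.mul hf.1)
  have hF_sign : ∀ n, ∀ x ∈ s, 0 ≤ (-1:ℝ) ^ n * iteratedDerivWithin n F s x := by
    intro n x hx
    rw [iteratedDerivWithin_const_mul hx udo _ (((hexps.mul hf.1).of_le (by exact_mod_cast le_top)) x hx)]
    have := prod_sign n _ _ hexps hf.1 (hexp n) (hdf_sign n) x hx
    calc (0:ℝ) ≤ lam * ((-1:ℝ) ^ n * iteratedDerivWithin n (fun y => Real.exp (h y) * deriv f y) s x) :=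
          mul_nonneg (by linarith) this
      _ = (-1:ℝ) ^ n * (lam * iteratedDerivWithin n (fun y => Real.exp (h y) * deriv f y) s x) := by ring
  -- the target equals F on s
  have hEqOn : ∀ x ∈ s, x ^ (1 - lam) * deriv (fun y => f y ^ lam) x = F x := by
    intro x hx
    have hxpos : (0:ℝ) < x := hx
    have hfd : DifferentiableAt ℝ f x :=
      (hfsmooth.contDiffAt (isOpen_Ioi.mem_nhds hx)).differentiableAt (by simp)
    have hda : HasDerivAt f (deriv f x) x := hfd.hasDerivAt
    have hrd : HasDerivAt (fun y => f y ^ lam) (deriv f x * lam * f x ^ (lam - 1)) x :=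
      hda.rpow_const (Or.inr hlam)
    rw [hrd.deriv]
    have hfx : (0:ℝ) < f x := hfpos x hxpos
    have e1 : Real.exp (h x) = (f x / x) ^ (lam - 1) := by
      rw [Real.rpow_def_of_pos (hdivpos x hx), mul_comm]
    have e2 : (f x / x) ^ (lam - 1) = f x ^ (lam - 1) / x ^ (lam - 1) :=
      Real.div_rpow hfx.le hxpos.le _
    have e3 : x ^ (1 - lam) = (x ^ (lam - 1))⁻¹ := by
      rw [show (1 - lam) = -(lam - 1) by ring, Real.rpow_neg hxpos.le]
    have hxl : (0:ℝ) < x ^ (lam - 1) := Real.rpow_pos_of_pos hxpos _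
    rw [hFdef]
    simp only []
    rw [e1, e2, e3]
    field_simp
  constructor
  · exact hF_smooth.congr hEqOn
  · intro n x hx
    have hx' : x ∈ s := hx
    rw [← iterDW_eq n _ hx']
    have : iteratedDerivWithin n (fun x => x ^ (1 - lam) * deriv (fun y => f y ^ lam) x) s x
        = iteratedDerivWithin n F s x :=
      iteratedDerivWithin_congr (fun y hy => hEqOn y hy) hx'
    rw [this]
    exact hF_sign n x hx'
end
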